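/- arXiv:2405.02540 — 13 statements merged into one kernel-verified Lean document; each statement's English description precedes it below -/
import Mathlib

section
/- Let T be a truss, M, N, P nonempty left T-modules and f:M→N, g:N→P morphisms of T-modules. Then the following are equivalent: (i) there exists e∈M such that the sequence M→f→N→g→P is exact, g is surjective, and ker_{f(e)} f = {e}; (ii) the sequence M→f→N→g→P is exact, f is injective, and g is surjective. (Condition (i) says precisely that ⋆⇢M→f→N→g→P→⋆ is a short exact sequence of T-modules, since e is an absorber of the e-induced module M^{(e)} and f(e) an absorber of N^{(f(e))}.) -/
/-- A truss: an abelian heap with an associative multiplication distributing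
over the ternary heap operation. -/
structure Truss (T : Type*) where
  bkt : T → T → T → T
  mul : T → T → T
  bkt_assoc : ∀ a b c d e, bkt (bkt a b c) d e = bkt a b (bkt c d e)
  bkt_idr : ∀ a b, bkt a b b = a
  bkt_idl : ∀ a b, bkt b b a = a
  bkt_comm : ∀ a b c, bkt a b c = bkt c b a
  mul_assoc : ∀ a b c, mul (mul a b) c = mul a (mul b c)
  mul_bkt : ∀ w x y z, mul w (bkt x y z) = bkt (mul w x) (mul w y) (mul w z)
  bkt_mul : ∀ w x y z, mul (bkt x y z) w = bkt (mul x w) (mul y w) (mul z w)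

/-- A left module over a truss `τ`: an abelian heap `M` with an action of `T`. -/
structure TMod {T : Type*} (τ : Truss T) (M : Type*) where
  bkt : M → M → M → M
  smul : T → M → M
  bkt_assoc : ∀ a b c d e, bkt (bkt a b c) d e = bkt a b (bkt c d e)
  bkt_idr : ∀ a b, bkt a b b = a
  bkt_idl : ∀ a b, bkt b b a = a
  bkt_comm : ∀ a b c, bkt a b c = bkt c b a
  smul_mul : ∀ t t' m, smul t (smul t' m) = smul (τ.mul t t') m
  bkt_smul : ∀ t t' t'' m, smul (τ.bkt t t' t'') m = bkt (smul t m) (smul t' m) (smul t'' m)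
  smul_bkt : ∀ t m m' m'', smul t (bkt m m' m'') = bkt (smul t m) (smul t m') (smul t m'')

/-- A morphism of modules over a truss. -/
def IsTModHom {T M N : Type*} {τ : Truss T} (μM : TMod τ M) (μN : TMod τ N) (f : M → N) : Prop :=
  (∀ a b c, f (μM.bkt a b c) = μN.bkt (f a) (f b) (f c)) ∧
  ∀ t m, f (μM.smul t m) = μN.smul t (f m)

/-- `ker_e f`, the fibre of `f` over `e`. -/
def kerAt {M N : Type*} (f : M → N) (e : N) : Set M := {m | f m = e}

/-- The set of absorbers of a module over a truss. -/
def Abs {T M : Type*} {τ : Truss T} (μM : TMod τ M) : Set M := {m | ∀ t, μM.smul t m = m}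

/-- A submodule: a nonempty subset closed under the heap operation and the action. -/
def IsSubMod {T M : Type*} {τ : Truss T} (μM : TMod τ M) (S : Set M) : Prop :=
  S.Nonempty ∧ (∀ a ∈ S, ∀ b ∈ S, ∀ c ∈ S, μM.bkt a b c ∈ S) ∧
    ∀ t : T, ∀ m ∈ S, μM.smul t m ∈ S

/-- The congruence on `N` induced by a subset `S`. -/
def CongMod {T N : Type*} {τ : Truss T} (μN : TMod τ N) (S : Set N) (a b : N) : Prop :=
  ∃ s ∈ S, μN.bkt a b s ∈ S

/-- `π : N → Q` realizes `Q` as the quotient module `N/S`. -/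
def IsQuotientMod {T N Q : Type*} {τ : Truss T} (μN : TMod τ N) (S : Set N) (μQ : TMod τ Q)
    (π : N → Q) : Prop :=
  IsTModHom μN μQ π ∧ Function.Surjective π ∧
    ∀ a b : N, π a = π b ↔ CongMod μN S a b

/-- A short exact sequence `⋆ ⇢ A → B → C → ⋆` of modules over a truss
(on underlying maps). -/
def IsShortExactSeq {A B C : Type*} (f : A → B) (g : B → C) : Prop :=
  Function.Injective f ∧ Function.Surjective g ∧
    ∃ e ∈ Set.range g, Set.range f = kerAt g e

/-- The induced module structure on a submodule. -/
def TMod.sub {T M : Type*} {τ : Truss T} (μM : TMod τ M) (S : Set M) (hS : IsSubMod μM S) :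
    TMod τ S where
  bkt a b c := ⟨μM.bkt a b c, hS.2.1 a a.2 b b.2 c c.2⟩
  smul t m := ⟨μM.smul t m, hS.2.2 t m m.2⟩
  bkt_assoc a b c d e := Subtype.ext (μM.bkt_assoc a b c d e)
  bkt_idr a b := Subtype.ext (μM.bkt_idr a b)
  bkt_idl a b := Subtype.ext (μM.bkt_idl a b)
  bkt_comm a b c := Subtype.ext (μM.bkt_comm a b c)
  smul_mul t t' m := Subtype.ext (μM.smul_mul t t' m)
  bkt_smul t t' t'' m := Subtype.ext (μM.bkt_smul t t' t'' m)
  smul_bkt t m m' m'' := Subtype.ext (μM.smul_bkt t m m' m'')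

/-- The product of two modules over a truss, with componentwise operations. -/
def TMod.prod {T M N : Type*} {τ : Truss T} (μM : TMod τ M) (μN : TMod τ N) :
    TMod τ (M × N) where
  bkt a b c := (μM.bkt a.1 b.1 c.1, μN.bkt a.2 b.2 c.2)
  smul t m := (μM.smul t m.1, μN.smul t m.2)
  bkt_assoc := fun _ _ _ _ _ => Prod.ext (μM.bkt_assoc _ _ _ _ _) (μN.bkt_assoc _ _ _ _ _)
  bkt_idr := fun _ _ => Prod.ext (μM.bkt_idr _ _) (μN.bkt_idr _ _)
  bkt_idl := fun _ _ => Prod.ext (μM.bkt_idl _ _) (μN.bkt_idl _ _)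
  bkt_comm := fun _ _ _ => Prod.ext (μM.bkt_comm _ _ _) (μN.bkt_comm _ _ _)
  smul_mul := fun _ _ _ => Prod.ext (μM.smul_mul _ _ _) (μN.smul_mul _ _ _)
  bkt_smul := fun _ _ _ _ => Prod.ext (μM.bkt_smul _ _ _ _) (μN.bkt_smul _ _ _ _)
  smul_bkt := fun _ _ _ _ => Prod.ext (μM.smul_bkt _ _ _ _) (μN.smul_bkt _ _ _ _)

/-- The truss `T(R)` associated with a ring `R`. -/
def Truss.ofRing (R : Type*) [Ring R] : Truss R where
  bkt a b c := a - b + c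
  mul a b := a * b
  bkt_assoc a b c d e := by show a - b + c - d + e = a - b + (c - d + e); abel
  bkt_idr a b := by show a - b + b = a; abel
  bkt_idl a b := by show b - b + a = a; abel
  bkt_comm a b c := by show a - b + c = c - b + a; abel
  mul_assoc a b c := by show a * b * c = a * (b * c); rw [_root_.mul_assoc]
  mul_bkt w x y z := by show w * (x - y + z) = w * x - w * y + w * z; rw [mul_add, mul_sub]
  bkt_mul w x y z := by show (x - y + z) * w = x * w - y * w + z * w; rw [add_mul, sub_mul]

/-- The `T(R)`-module `T(M)` associated with an `R`-module `M`. -/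
def TMod.ofModule (R : Type*) [Ring R] (M : Type*) [AddCommGroup M] [Module R M] :
    TMod (Truss.ofRing R) M where
  bkt x y z := x - y + z
  smul r m := r • m
  bkt_assoc a b c d e := by show a - b + c - d + e = a - b + (c - d + e); abel
  bkt_idr a b := by show a - b + b = a; abel
  bkt_idl a b := by show b - b + a = a; abel
  bkt_comm a b c := by show a - b + c = c - b + a; abel
  smul_mul t t' m := by show t • t' • m = (t * t') • m; rw [smul_smul]
  bkt_smul t t' t'' m := by
    show (t - t' + t'') • m = t • m - t' • m + t'' • m
    rw [add_smul, sub_smul]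
  smul_bkt t x y z := by
    show t • (x - y + z) = t • x - t • y + t • z
    rw [smul_add, smul_sub]

/-- The set of `T`-module morphisms from `Q` to `M`. -/
def THom {T Q M : Type*} {τ : Truss T} (μQ : TMod τ Q) (μM : TMod τ M) : Type _ :=
  {α : Q → M // IsTModHom μQ μM α}

/-- characterization of short exact sequences of modules over a truss. -/
theorem stmt0 {T M N P : Type*} (τ : Truss T)
    (μM : TMod τ M) (μN : TMod τ N) (μP : TMod τ P)
    (hM : Nonempty M) (hN : Nonempty N) (hP : Nonempty P)
    (f : M → N) (g : N → P)
    (hf : IsTModHom μM μN f) (hg : IsTModHom μN μP g) :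
    (∃ e : M, (∃ e' ∈ Set.range g, Set.range f = kerAt g e') ∧
        Function.Surjective g ∧ kerAt f (f e) = {e}) ↔
      ((∃ e' ∈ Set.range g, Set.range f = kerAt g e') ∧
        Function.Injective f ∧ Function.Surjective g) := by
  constructor
  · rintro ⟨e, hex, hsurj, hker⟩
    refine ⟨hex, ?_, hsurj⟩
    intro a b hab
    have hm : μM.bkt a b e ∈ kerAt f (f e) := by
      show f (μM.bkt a b e) = f e
      rw [hf.1, hab, μN.bkt_idl]
    rw [hker] at hm
    have h := hm
    have : μM.bkt (μM.bkt a b e) e b = μM.bkt e e b := by rw [h]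
    rwa [μM.bkt_assoc, μM.bkt_idl, μM.bkt_idr] at this
  · rintro ⟨hex, hinj, hsurj⟩
    obtain ⟨e⟩ := hM
    refine ⟨e, hex, hsurj, ?_⟩
    ext m
    constructor
    · intro hm; exact hinj hm
    · rintro rfl; rfl
end

section
/- Let T be a truss and M a left T-module with Abs(M) nonempty. Then Abs(M) is a submodule of M, and the sequence ⋆⇢Abs(M)→ι→M→π→M/Abs(M)→⋆, where ι is the inclusion and π the canonical projection, is short exact: ι is injective, π is surjective, and Im ι = ker_{[Abs(M)]}π, where [Abs(M)] denotes the common class in M/Abs(M) of the elements of Abs(M). -/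
/-- the sequence `⋆ ⇢ Abs(M) → M → M/Abs(M) → ⋆` is short exact. -/
theorem stmt3 {T M Q : Type*} (τ : Truss T) (μM : TMod τ M)
    (hne : (Abs μM).Nonempty)
    (μQ : TMod τ Q) (π : M → Q) (hπ : IsQuotientMod μM (Abs μM) μQ π) :
    IsSubMod μM (Abs μM) ∧
    Function.Injective (fun x : ↥(Abs μM) => (x : M)) ∧
    Function.Surjective π ∧
    ∀ s ∈ Abs μM, Set.range (fun x : ↥(Abs μM) => (x : M)) = kerAt π (π s) := by
  refine ⟨⟨hne, ?_, ?_⟩, ?_, hπ.2.1, ?_⟩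
  · intro a ha b hb c hc t
    rw [μM.smul_bkt, ha t, hb t, hc t]
  · intro t m hm t'
    rw [hm t, hm t']
  · intro a b hab
    exact Subtype.ext hab
  · intro s hs
    ext m
    constructor
    · rintro ⟨⟨x, hx⟩, rfl⟩
      show π x = π s
      rw [(hπ.2.2 x s)]
      exact ⟨s, hs, by rw [μM.bkt_idr]; exact hx⟩
    · intro hm
      obtain ⟨s', hs', hb⟩ := (hπ.2.2 m s).mp hm
      have hmeq : μM.bkt (μM.bkt m s s') s' s = m := by
        rw [μM.bkt_assoc, μM.bkt_idl, μM.bkt_idr]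
      have : m ∈ Abs μM := by
        intro t
        calc μM.smul t m = μM.smul t (μM.bkt (μM.bkt m s s') s' s) := by rw [hmeq]
        _ = μM.bkt (μM.smul t (μM.bkt m s s')) (μM.smul t s') (μM.smul t s) := μM.smul_bkt ..
        _ = m := by rw [hb t, hs' t, hs t, hmeq]
      exact ⟨⟨m, this⟩, rfl⟩
end

section
/- Let T be a truss and consider a commutative diagram of left T-modules with rows M'→φ→M→ψ→M''→⋆ and ⋆⇢N'→φ₁→N→ψ₁→N'', and vertical morphisms f':M'→N', f:M→N, f'':M''→N'' with f∘φ=φ₁∘f' and f''∘ψ=ψ₁∘f, where ψ is surjective, φ₁ is injective, there exists m''∈Im ψ with Im φ=ker_{m''}ψ, and there exists n''∈Im ψ₁ with Im φ₁=ker_{n''}ψ₁. Assume Abs(M') is nonempty and fix e'∈Abs(M'). Then ker_{f'(e')}f', ker_{φ₁f'(e')}f and ker_{ψ₁φ₁f'(e')}f'' are submodules of M', M, M'' respectively; φ and ψ restrict to T-module morphisms φ₀: ker_{f'(e')}f' → ker_{φ₁f'(e')}f and ψ₀: ker_{φ₁f'(e')}f → ker_{ψ₁φ₁f'(e')}f'';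 and Im φ₀ = ker_{ψ(φ(e'))}ψ₀. -/
/-- the kernels form submodules, the morphisms restrict, and the
restricted kernel sequence is exact. -/
theorem stmt6 {T M' M M'' N' N N'' : Type*} (τ : Truss T)
    (μM' : TMod τ M') (μM : TMod τ M) (μM'' : TMod τ M'')
    (μN' : TMod τ N') (μN : TMod τ N) (μN'' : TMod τ N'')
    (φ : M' → M) (ψ : M → M'') (φ₁ : N' → N) (ψ₁ : N → N'')
    (f' : M' → N') (f : M → N) (f'' : M'' → N'')
    (hφ : IsTModHom μM' μM φ) (hψ : IsTModHom μM μM'' ψ)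
    (hφ₁ : IsTModHom μN' μN φ₁) (hψ₁ : IsTModHom μN μN'' ψ₁)
    (hf' : IsTModHom μM' μN' f') (hf : IsTModHom μM μN f)
    (hf'' : IsTModHom μM'' μN'' f'')
    (hsq1 : f ∘ φ = φ₁ ∘ f') (hsq2 : f'' ∘ ψ = ψ₁ ∘ f)
    (hψs : Function.Surjective ψ) (hφ₁i : Function.Injective φ₁)
    (hrow1 : ∃ m'' ∈ Set.range ψ, Set.range φ = kerAt ψ m'')
    (hrow2 : ∃ n'' ∈ Set.range ψ₁, Set.range φ₁ = kerAt ψ₁ n'')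
    (e' : M') (he' : e' ∈ Abs μM') :
    ∃ hK' : IsSubMod μM' (kerAt f' (f' e')),
    ∃ hK : IsSubMod μM (kerAt f (φ₁ (f' e'))),
    ∃ hK'' : IsSubMod μM'' (kerAt f'' (ψ₁ (φ₁ (f' e')))),
    ∃ hmφ : Set.MapsTo φ (kerAt f' (f' e')) (kerAt f (φ₁ (f' e'))),
    ∃ hmψ : Set.MapsTo ψ (kerAt f (φ₁ (f' e'))) (kerAt f'' (ψ₁ (φ₁ (f' e')))),
      IsTModHom (TMod.sub μM' _ hK') (TMod.sub μM _ hK)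
        (Set.MapsTo.restrict φ _ _ hmφ) ∧
      IsTModHom (TMod.sub μM _ hK) (TMod.sub μM'' _ hK'')
        (Set.MapsTo.restrict ψ _ _ hmψ) ∧
      ∃ hmem : ψ (φ e') ∈ kerAt f'' (ψ₁ (φ₁ (f' e'))),
        Set.range (Set.MapsTo.restrict φ _ _ hmφ) =
          kerAt (Set.MapsTo.restrict ψ _ _ hmψ) ⟨ψ (φ e'), hmem⟩ := by
  obtain ⟨m'', hm''r, hrow1⟩ := hrow1
  -- f' e' is an absorber image: t • f' e' = f' e'
  have habs : ∀ t, μN'.smul t (f' e') = f' e' := fun t => by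
    rw [← hf'.2, he' t]
  have habsN : ∀ t, μN.smul t (φ₁ (f' e')) = φ₁ (f' e') := fun t => by
    rw [← hφ₁.2, habs t]
  have habsN'' : ∀ t, μN''.smul t (ψ₁ (φ₁ (f' e'))) = ψ₁ (φ₁ (f' e')) := fun t => by
    rw [← hψ₁.2, habsN t]
  have hfφ : ∀ x, f (φ x) = φ₁ (f' x) := fun x => congrFun hsq1 x
  have hfψ : ∀ x, f'' (ψ x) = ψ₁ (f x) := fun x => congrFun hsq2 x
  have hK' : IsSubMod μM' (kerAt f' (f' e')) := by
    refine ⟨⟨e', rfl⟩, ?_, ?_⟩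
    · intro a ha b hb c hc
      show f' (μM'.bkt a b c) = f' e'
      rw [hf'.1, ha, hb, hc, μN'.bkt_idr]
    · intro t m hm
      show f' (μM'.smul t m) = f' e'
      rw [hf'.2, hm, habs]
  have hK : IsSubMod μM (kerAt f (φ₁ (f' e'))) := by
    refine ⟨⟨φ e', by simpa [kerAt] using hfφ e'⟩, ?_, ?_⟩
    · intro a ha b hb c hc
      show f (μM.bkt a b c) = _
      rw [hf.1, ha, hb, hc, μN.bkt_idr]
    · intro t m hm
      show f (μM.smul t m) = _
      rw [hf.2, hm, habsN]
  have hK'' : IsSubMod μM'' (kerAt f'' (ψ₁ (φ₁ (f' e')))) := by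
    refine ⟨⟨ψ (φ e'), by simp [kerAt, hfψ, hfφ]⟩, ?_, ?_⟩
    · intro a ha b hb c hc
      show f'' (μM''.bkt a b c) = _
      rw [hf''.1, ha, hb, hc, μN''.bkt_idr]
    · intro t m hm
      show f'' (μM''.smul t m) = _
      rw [hf''.2, hm, habsN'']
  have hmφ : Set.MapsTo φ (kerAt f' (f' e')) (kerAt f (φ₁ (f' e'))) := by
    intro m hm
    show f (φ m) = _
    rw [hfφ, hm]
  have hmψ : Set.MapsTo ψ (kerAt f (φ₁ (f' e'))) (kerAt f'' (ψ₁ (φ₁ (f' e')))) := by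
    intro m hm
    show f'' (ψ m) = _
    rw [hfψ, hm]
  refine ⟨hK', hK, hK'', hmφ, hmψ, ⟨?_, ?_⟩, ⟨?_, ?_⟩, by simp [kerAt, hfψ, hfφ], ?_⟩
  · intro a b c; exact Subtype.ext (hφ.1 a b c)
  · intro t m; exact Subtype.ext (hφ.2 t m)
  · intro a b c; exact Subtype.ext (hψ.1 a b c)
  · intro t m; exact Subtype.ext (hψ.2 t m)
  · ext ⟨m, hm⟩
    constructor
    · rintro ⟨⟨m', hm'⟩, hmm⟩
      have hmm' : φ m' = m := congrArg Subtype.val hmm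
      have h1 : ψ m = m'' := by
        have := (Set.ext_iff.mp hrow1 m).mp ⟨m', hmm'⟩
        exact this
      have h2 : ψ (φ e') = m'' := (Set.ext_iff.mp hrow1 (φ e')).mp ⟨e', rfl⟩
      exact Subtype.ext (h1.trans h2.symm)
    · intro h
      have hψm : ψ m = ψ (φ e') := congrArg Subtype.val h
      have h2 : ψ (φ e') = m'' := (Set.ext_iff.mp hrow1 (φ e')).mp ⟨e', rfl⟩
      have : m ∈ Set.range φ := by rw [hrow1]; exact hψm.trans h2
      obtain ⟨m', hm'⟩ := this
      have hker : f' m' = f' e' := by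
        apply hφ₁i
        rw [← hfφ, hm', hm]
      exact ⟨⟨m', hker⟩, Subtype.ext hm'⟩
end

section
/- Let T be a truss and consider a commutative diagram of left T-modules with rows M'→φ→M→ψ→M''→⋆ and ⋆⇢N'→φ₁→N→ψ₁→N'', and vertical morphisms f':M'→N', f:M→N, f'':M''→N'' with f∘φ=φ₁∘f' and f''∘ψ=ψ₁∘f, where ψ is surjective, φ₁ is injective, there exists m''∈Im ψ with Im φ=ker_{m''}ψ, and there exists n''∈Im ψ₁ with Im φ₁=ker_{n''}ψ₁. Then the assignments φ₂: N'/Im f' → N/Im f, [n']↦[φ₁(n')], and ψ₂: N/Im f → N''/Im f'', [n]↦[ψ₁(n)], are well-defined morphisms of T-modules, and Im φ₂ = ker_{[Im f'']}ψ₂, where [x] denotes the class of x in the respective quotient and [Im f''] the class of the elements of Im f'' in N''/Im f''. -/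
lemma heap_cancel {T M : Type*} {τ : Truss T} (μ : TMod τ M) (a b c : M) :
    μ.bkt (μ.bkt a b c) a b = c := by
  rw [μ.bkt_comm a b c, μ.bkt_assoc, μ.bkt_idl, μ.bkt_idr]

/-- the induced maps on cokernels are well defined morphisms and
the cokernel sequence is exact. -/
theorem stmt7 {Q' Q Q'' : Type*} {T M' M M'' N' N N'' : Type*} (τ : Truss T)
    (μM' : TMod τ M') (μM : TMod τ M) (μM'' : TMod τ M'')
    (μN' : TMod τ N') (μN : TMod τ N) (μN'' : TMod τ N'')
    (φ : M' → M) (ψ : M → M'') (φ₁ : N' → N) (ψ₁ : N → N'')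
    (f' : M' → N') (f : M → N) (f'' : M'' → N'')
    (hφ : IsTModHom μM' μM φ) (hψ : IsTModHom μM μM'' ψ)
    (hφ₁ : IsTModHom μN' μN φ₁) (hψ₁ : IsTModHom μN μN'' ψ₁)
    (hf' : IsTModHom μM' μN' f') (hf : IsTModHom μM μN f)
    (hf'' : IsTModHom μM'' μN'' f'')
    (hsq1 : f ∘ φ = φ₁ ∘ f') (hsq2 : f'' ∘ ψ = ψ₁ ∘ f)
    (hψs : Function.Surjective ψ) (hφ₁i : Function.Injective φ₁)
    (hrow1 : ∃ m'' ∈ Set.range ψ, Set.range φ = kerAt ψ m'')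
    (hrow2 : ∃ n'' ∈ Set.range ψ₁, Set.range φ₁ = kerAt ψ₁ n'')
    (μQ' : TMod τ Q') (μQ : TMod τ Q) (μQ'' : TMod τ Q'')
    (π' : N' → Q') (π : N → Q) (π'' : N'' → Q'')
    (hq' : IsQuotientMod μN' (Set.range f') μQ' π')
    (hq : IsQuotientMod μN (Set.range f) μQ π)
    (hq'' : IsQuotientMod μN'' (Set.range f'') μQ'' π'') :
    ∃ φ₂ : Q' → Q, ∃ ψ₂ : Q → Q'',
      IsTModHom μQ' μQ φ₂ ∧ IsTModHom μQ μQ'' ψ₂ ∧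
      φ₂ ∘ π' = π ∘ φ₁ ∧ ψ₂ ∘ π = π'' ∘ ψ₁ ∧
      ∀ s'' ∈ Set.range f'', Set.range φ₂ = kerAt ψ₂ (π'' s'') := by

  obtain ⟨hπ'h, hπ's, hπ'c⟩ := hq'
  obtain ⟨hπh, hπs, hπc⟩ := hq
  obtain ⟨hπ''h, hπ''s, hπ''c⟩ := hq''
  obtain ⟨m₀'', hm₀'', hrow1⟩ := hrow1
  obtain ⟨n'', hn'', hrow2⟩ := hrow2
  have hsq1' : ∀ a, f (φ a) = φ₁ (f' a) := fun a => congrFun hsq1 a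
  have hsq2' : ∀ a, f'' (ψ a) = ψ₁ (f a) := fun a => congrFun hsq2 a
  -- every φ₁-image lands on the fibre over n''
  have hc1 : ∀ a, ψ₁ (φ₁ a) = n'' := by
    intro a
    have : φ₁ a ∈ kerAt ψ₁ n'' := by rw [← hrow2]; exact ⟨a, rfl⟩
    exact this
  -- n'' belongs to the image of f''
  have hn''f : n'' ∈ Set.range f'' := by
    obtain ⟨m, hm⟩ := hm₀''
    have hmem : m ∈ Set.range φ := by rw [hrow1]; exact hm
    obtain ⟨m', hm'⟩ := hmem
    refine ⟨m₀'', ?_⟩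
    have : ψ (φ m') = m₀'' := by rw [hm', hm]
    rw [← this, hsq2', hsq1', hc1]
  -- well-definedness of the induced maps
  have wd1 : ∀ a b, π' a = π' b → π (φ₁ a) = π (φ₁ b) := by
    intro a b hab
    obtain ⟨s, ⟨m1, hm1⟩, ⟨m2, hm2⟩⟩ := (hπ'c a b).mp hab
    refine (hπc _ _).mpr ⟨φ₁ s, ⟨φ m1, by rw [hsq1', hm1]⟩, ⟨φ m2, ?_⟩⟩
    rw [hsq1', hm2, hφ₁.1]
  have wd2 : ∀ a b, π a = π b → π'' (ψ₁ a) = π'' (ψ₁ b) := by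
    intro a b hab
    obtain ⟨s, ⟨m1, hm1⟩, ⟨m2, hm2⟩⟩ := (hπc a b).mp hab
    refine (hπ''c _ _).mpr ⟨ψ₁ s, ⟨ψ m1, by rw [hsq2', hm1]⟩, ⟨ψ m2, ?_⟩⟩
    rw [hsq2', hm2, hψ₁.1]
  set φ₂ : Q' → Q := fun x => π (φ₁ (Function.surjInv hπ's x)) with hφ₂def
  set ψ₂ : Q → Q'' := fun x => π'' (ψ₁ (Function.surjInv hπs x)) with hψ₂def
  have key1 : ∀ a, φ₂ (π' a) = π (φ₁ a) := fun a =>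
    wd1 _ a (Function.surjInv_eq hπ's (π' a))
  have key2 : ∀ a, ψ₂ (π a) = π'' (ψ₁ a) := fun a =>
    wd2 _ a (Function.surjInv_eq hπs (π a))
  refine ⟨φ₂, ψ₂, ⟨?_, ?_⟩, ⟨?_, ?_⟩, funext key1, funext key2, ?_⟩
  · intro x y z
    obtain ⟨a, rfl⟩ := hπ's x; obtain ⟨b, rfl⟩ := hπ's y; obtain ⟨c, rfl⟩ := hπ's z
    rw [← hπ'h.1, key1, key1, key1, key1, hφ₁.1, hπh.1]
  · intro t x
    obtain ⟨a, rfl⟩ := hπ's x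
    rw [← hπ'h.2, key1, key1, hφ₁.2, hπh.2]
  · intro x y z
    obtain ⟨a, rfl⟩ := hπs x; obtain ⟨b, rfl⟩ := hπs y; obtain ⟨c, rfl⟩ := hπs z
    rw [← hπh.1, key2, key2, key2, key2, hψ₁.1, hπ''h.1]
  · intro t x
    obtain ⟨a, rfl⟩ := hπs x
    rw [← hπh.2, key2, key2, hψ₁.2, hπ''h.2]
  · rintro s'' ⟨m'', rfl⟩
    ext q
    constructor
    · rintro ⟨x, rfl⟩
      obtain ⟨a, rfl⟩ := hπ's x
      show ψ₂ (φ₂ (π' a)) = π'' (f'' m'')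
      rw [key1, key2, hc1]
      refine (hπ''c _ _).mpr ⟨f'' m'', ⟨m'', rfl⟩, ?_⟩
      rw [μN''.bkt_idr]
      exact hn''f
    · intro hqk
      obtain ⟨nq, rfl⟩ := hπs q
      have hqk' : π'' (ψ₁ nq) = π'' (f'' m'') := by rw [← key2]; exact hqk
      obtain ⟨s, ⟨m1, hm1⟩, ⟨m3, hm3⟩⟩ := (hπ''c _ _).mp hqk'
      obtain ⟨a'', ha''⟩ := hψs m''
      obtain ⟨a1, ha1⟩ := hψs m1
      obtain ⟨a3, ha3⟩ := hψs m3
      obtain ⟨n0, hn0⟩ := hn''f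
      obtain ⟨a0, ha0⟩ := hψs n0
      -- the correcting element
      set w : N := f (μM.bkt a1 a3 a0) with hw
      set u : N := μN.bkt nq (f a'') w with hu
      have hψ₁u : ψ₁ u = n'' := by
        have h1 : ψ₁ (f a'') = f'' m'' := by rw [← hsq2', ha'']
        have h2 : ψ₁ w = μN''.bkt (f'' m1) (f'' m3) n'' := by
          rw [hw, ← hsq2', hψ.1, hf''.1, ha1, ha3, ha0, hn0]
        rw [hu, hψ₁.1, h1, h2, ← μN''.bkt_assoc, hm1, ← hm3, μN''.bkt_idl]
      have humem : u ∈ Set.range φ₁ := by rw [hrow2]; exact hψ₁u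
      obtain ⟨v, hv⟩ := humem
      refine ⟨π' v, ?_⟩
      rw [key1, hv]
      refine (hπc _ _).mpr ⟨f a'', ⟨a'', rfl⟩, ?_⟩
      rw [hu, heap_cancel]
      exact ⟨μM.bkt a1 a3 a0, rfl⟩
end

section
/- (Snake Lemma) Let T be a truss and consider a commutative diagram of left T-modules with rows M'→φ→M→ψ→M''→⋆ and ⋆⇢N'→φ₁→N→ψ₁→N'', and vertical morphisms f':M'→N', f:M→N, f'':M''→N'' with f∘φ=φ₁∘f' and f''∘ψ=ψ₁∘f, where ψ is surjective, φ₁ is injective, there exists m''∈Im ψ with Im φ=ker_{m''}ψ, and there exists n''∈Im ψ₁ with Im φ₁=ker_{n''}ψ₁. Assume Abs(M') is nonempty and fix e'∈Abs(M'). Then there exists a morphism of T-modules δ: ker_{ψ₁φ₁f'(e')}f'' → N'/Im f', given by δ(a'')=[a'] where a∈M is any element with ψ(a)=a'' and a'∈N' is the unique element with φ₁(a')=f(a), such that the six-term sequence ker_{f'(e')}f' →φ₀→ ker_{φ₁f'(e')}f →ψ₀→ ker_{ψ₁φ₁f'(e')}f'' →δ→ N'/Im f' →φ₂→ N/Im f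 →ψ₂→ N''/Im f'' is exact, i.e. Im φ₀ = ker_{ψφ(e')}ψ₀, Im ψ₀ = ker_{[Im f']}δ, Im δ = ker_{[Im f]}φ₂, and Im φ₂ = ker_{[Im f'']}ψ₂; here φ₀, ψ₀ are the restrictions of φ, ψ, φ₂([n'])=[φ₁(n')], ψ₂([n])=[ψ₁(n)], and [x] denotes the class in the respective quotient. -/
lemma heap_solve {T M : Type*} {τ : Truss T} (μ : TMod τ M) {a b c d : M}
    (h : μ.bkt a b c = d) : a = μ.bkt d c b := by
  have h2 : μ.bkt (μ.bkt a b c) c b = a := by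
    rw [μ.bkt_assoc, μ.bkt_idl, μ.bkt_idr]
  rw [h] at h2
  exact h2.symm

/-- Snake Lemma for modules over trusses. -/
theorem stmt8 {Q' Q Q'' : Type*} {T M' M M'' N' N N'' : Type*} (τ : Truss T)
    (μM' : TMod τ M') (μM : TMod τ M) (μM'' : TMod τ M'')
    (μN' : TMod τ N') (μN : TMod τ N) (μN'' : TMod τ N'')
    (φ : M' → M) (ψ : M → M'') (φ₁ : N' → N) (ψ₁ : N → N'')
    (f' : M' → N') (f : M → N) (f'' : M'' → N'')
    (hφ : IsTModHom μM' μM φ) (hψ : IsTModHom μM μM'' ψ)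
    (hφ₁ : IsTModHom μN' μN φ₁) (hψ₁ : IsTModHom μN μN'' ψ₁)
    (hf' : IsTModHom μM' μN' f') (hf : IsTModHom μM μN f)
    (hf'' : IsTModHom μM'' μN'' f'')
    (hsq1 : f ∘ φ = φ₁ ∘ f') (hsq2 : f'' ∘ ψ = ψ₁ ∘ f)
    (hψs : Function.Surjective ψ) (hφ₁i : Function.Injective φ₁)
    (hrow1 : ∃ m'' ∈ Set.range ψ, Set.range φ = kerAt ψ m'')
    (hrow2 : ∃ n'' ∈ Set.range ψ₁, Set.range φ₁ = kerAt ψ₁ n'')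
    (μQ' : TMod τ Q') (μQ : TMod τ Q) (μQ'' : TMod τ Q'')
    (π' : N' → Q') (π : N → Q) (π'' : N'' → Q'')
    (hq' : IsQuotientMod μN' (Set.range f') μQ' π')
    (hq : IsQuotientMod μN (Set.range f) μQ π)
    (hq'' : IsQuotientMod μN'' (Set.range f'') μQ'' π'')
    (e' : M') (he' : e' ∈ Abs μM') :
    ∃ hK' : IsSubMod μM' (kerAt f' (f' e')),
    ∃ hK : IsSubMod μM (kerAt f (φ₁ (f' e'))),
    ∃ hK'' : IsSubMod μM'' (kerAt f'' (ψ₁ (φ₁ (f' e')))),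
    ∃ hmφ : Set.MapsTo φ (kerAt f' (f' e')) (kerAt f (φ₁ (f' e'))),
    ∃ hmψ : Set.MapsTo ψ (kerAt f (φ₁ (f' e'))) (kerAt f'' (ψ₁ (φ₁ (f' e')))),
    ∃ φ₂ : Q' → Q, ∃ ψ₂ : Q → Q'',
    ∃ δ : ↥(kerAt f'' (ψ₁ (φ₁ (f' e')))) → Q',
      IsTModHom (TMod.sub μM' _ hK') (TMod.sub μM _ hK)
        (Set.MapsTo.restrict φ _ _ hmφ) ∧
      IsTModHom (TMod.sub μM _ hK) (TMod.sub μM'' _ hK'')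
        (Set.MapsTo.restrict ψ _ _ hmψ) ∧
      IsTModHom μQ' μQ φ₂ ∧ IsTModHom μQ μQ'' ψ₂ ∧
      IsTModHom (TMod.sub μM'' _ hK'') μQ' δ ∧
      φ₂ ∘ π' = π ∘ φ₁ ∧ ψ₂ ∘ π = π'' ∘ ψ₁ ∧
      (∀ (a'' : ↥(kerAt f'' (ψ₁ (φ₁ (f' e'))))) (a : M) (a' : N'),
        ψ a = (a'' : M'') → φ₁ a' = f a → δ a'' = π' a') ∧
      (∃ hmem : ψ (φ e') ∈ kerAt f'' (ψ₁ (φ₁ (f' e'))),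
        Set.range (Set.MapsTo.restrict φ _ _ hmφ) =
          kerAt (Set.MapsTo.restrict ψ _ _ hmψ) ⟨ψ (φ e'), hmem⟩) ∧
      (∀ s' ∈ Set.range f',
        Set.range (Set.MapsTo.restrict ψ _ _ hmψ) = kerAt δ (π' s')) ∧
      (∀ s ∈ Set.range f, Set.range δ = kerAt φ₂ (π s)) ∧
      (∀ s'' ∈ Set.range f'', Set.range φ₂ = kerAt ψ₂ (π'' s'')) := by
    classical
  haveI : Nonempty N' := ⟨f' e'⟩
  obtain ⟨m'', -, hrow1⟩ := hrow1
  obtain ⟨n'', -, hrow2⟩ := hrow2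
  have hsq1' : ∀ x, f (φ x) = φ₁ (f' x) := fun x => congrFun hsq1 x
  have hsq2' : ∀ x, f'' (ψ x) = ψ₁ (f x) := fun x => congrFun hsq2 x
  have hψφ : ∀ x, ψ (φ x) = m'' := fun x => by
    have h : φ x ∈ kerAt ψ m'' := by rw [← hrow1]; exact ⟨x, rfl⟩
    exact h
  have hψmem : ∀ m : M, ψ m = m'' → m ∈ Set.range φ := fun m hm => by
    rw [hrow1]; exact hm
  have hψ₁φ₁ : ∀ x, ψ₁ (φ₁ x) = n'' := fun x => by
    have h : φ₁ x ∈ kerAt ψ₁ n'' := by rw [← hrow2]; exact ⟨x, rfl⟩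
    exact h
  have hψ₁mem : ∀ nn : N, ψ₁ nn = n'' → nn ∈ Set.range φ₁ := fun nn h => by
    rw [hrow2]; exact h
  have he'' : ∀ t, μM'.smul t e' = e' := he'
  have habs' : ∀ t, μN'.smul t (f' e') = f' e' := fun t => by rw [← hf'.2, he'' t]
  have habs : ∀ t, μN.smul t (φ₁ (f' e')) = φ₁ (f' e') := fun t => by
    rw [← hφ₁.2, habs' t]
  have habs2 : ∀ t, μN''.smul t (ψ₁ (φ₁ (f' e'))) = ψ₁ (φ₁ (f' e')) := fun t => by
    rw [← hψ₁.2, habs t]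
  have hK' : IsSubMod μM' (kerAt f' (f' e')) := by
    refine ⟨⟨e', rfl⟩, ?_, ?_⟩
    · intro a ha b hb c hc
      show f' (μM'.bkt a b c) = f' e'
      rw [hf'.1, show f' a = f' e' from ha, show f' b = f' e' from hb,
        show f' c = f' e' from hc, μN'.bkt_idr]
    · intro t m hm
      show f' (μM'.smul t m) = f' e'
      rw [hf'.2, show f' m = f' e' from hm, habs']
  have hK : IsSubMod μM (kerAt f (φ₁ (f' e'))) := by
    refine ⟨⟨φ e', hsq1' e'⟩, ?_, ?_⟩
    · intro a ha b hb c hc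
      show f (μM.bkt a b c) = φ₁ (f' e')
      rw [hf.1, show f a = _ from ha, show f b = _ from hb, show f c = _ from hc,
        μN.bkt_idr]
    · intro t m hm
      show f (μM.smul t m) = φ₁ (f' e')
      rw [hf.2, show f m = _ from hm, habs]
  have hK'' : IsSubMod μM'' (kerAt f'' (ψ₁ (φ₁ (f' e')))) := by
    refine ⟨⟨ψ (φ e'), by show f'' _ = _; rw [hsq2', hsq1']⟩, ?_, ?_⟩
    · intro a ha b hb c hc
      show f'' (μM''.bkt a b c) = ψ₁ (φ₁ (f' e'))
      rw [hf''.1, show f'' a = _ from ha, show f'' b = _ from hb,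
        show f'' c = _ from hc, μN''.bkt_idr]
    · intro t m hm
      show f'' (μM''.smul t m) = ψ₁ (φ₁ (f' e'))
      rw [hf''.2, show f'' m = _ from hm, habs2]
  have hmφ : Set.MapsTo φ (kerAt f' (f' e')) (kerAt f (φ₁ (f' e'))) := by
    intro x hx
    show f (φ x) = φ₁ (f' e')
    rw [hsq1', show f' x = f' e' from hx]
  have hmψ : Set.MapsTo ψ (kerAt f (φ₁ (f' e'))) (kerAt f'' (ψ₁ (φ₁ (f' e')))) := by
    intro x hx
    show f'' (ψ x) = ψ₁ (φ₁ (f' e'))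
    rw [hsq2', show f x = _ from hx]
  have hπs : Function.Surjective π := hq.2.1
  have hπ's : Function.Surjective π' := hq'.2.1
  have hπcongr : ∀ a b : N, (∃ s ∈ Set.range f, μN.bkt a b s ∈ Set.range f) → π a = π b :=
    fun a b h => (hq.2.2 a b).mpr h
  have hπ'congr : ∀ a b : N',
      (∃ s ∈ Set.range f', μN'.bkt a b s ∈ Set.range f') → π' a = π' b :=
    fun a b h => (hq'.2.2 a b).mpr h
  have hπ''congr : ∀ a b : N'',
      (∃ s ∈ Set.range f'', μN''.bkt a b s ∈ Set.range f'') → π'' a = π'' b :=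
    fun a b h => (hq''.2.2 a b).mpr h
  have hπ'const : ∀ x y, π' (f' x) = π' (f' y) := fun x y =>
    hπ'congr _ _ ⟨f' y, ⟨y, rfl⟩, by rw [μN'.bkt_idr]; exact ⟨x, rfl⟩⟩
  have hπconst : ∀ x y, π (f x) = π (f y) := fun x y =>
    hπcongr _ _ ⟨f y, ⟨y, rfl⟩, by rw [μN.bkt_idr]; exact ⟨x, rfl⟩⟩
  have hπ''const : ∀ x y, π'' (f'' x) = π'' (f'' y) := fun x y =>
    hπ''congr _ _ ⟨f'' y, ⟨y, rfl⟩, by rw [μN''.bkt_idr]; exact ⟨x, rfl⟩⟩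
  have hinv : ∀ nn : N, nn ∈ Set.range φ₁ → φ₁ (Function.invFun φ₁ nn) = nn :=
    fun nn h => Function.invFun_eq h
  have hlift : ∀ x, ψ (Function.surjInv hψs x) = x := fun x => Function.surjInv_eq hψs x
  have hfmem : ∀ a'' : ↥(kerAt f'' (ψ₁ (φ₁ (f' e')))),
      f (Function.surjInv hψs a''.1) ∈ Set.range φ₁ := by
    intro a''
    apply hψ₁mem
    rw [← hsq2', hlift, show f'' a''.1 = _ from a''.2, hψ₁φ₁]
  set φ₂ : Q' → Q := fun q' => π (φ₁ (Function.surjInv hπ's q')) with hφ₂def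
  set ψ₂ : Q → Q'' := fun q => π'' (ψ₁ (Function.surjInv hπs q)) with hψ₂def
  set δ : ↥(kerAt f'' (ψ₁ (φ₁ (f' e')))) → Q' :=
    fun a'' => π' (Function.invFun φ₁ (f (Function.surjInv hψs a''.1))) with hδdef
  have hφ₂π' : ∀ n', φ₂ (π' n') = π (φ₁ n') := by
    intro a
    simp only [hφ₂def]
    have hx : π' (Function.surjInv hπ's (π' a)) = π' a := Function.surjInv_eq hπ's _
    obtain ⟨s, ⟨u, rfl⟩, v, hv⟩ := (hq'.2.2 _ _).mp hx
    refine hπcongr _ _ ⟨φ₁ (f' u), ⟨φ u, hsq1' u⟩, ⟨φ v, ?_⟩⟩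
    rw [hsq1' v, hv, hφ₁.1]
  have hψ₂π : ∀ n, ψ₂ (π n) = π'' (ψ₁ n) := by
    intro a
    simp only [hψ₂def]
    have hx : π (Function.surjInv hπs (π a)) = π a := Function.surjInv_eq hπs _
    obtain ⟨s, ⟨u, rfl⟩, v, hv⟩ := (hq.2.2 _ _).mp hx
    refine hπ''congr _ _ ⟨ψ₁ (f u), ⟨ψ u, hsq2' u⟩, ⟨ψ v, ?_⟩⟩
    rw [hsq2' v, hv, hψ₁.1]
  have hδspec : ∀ (a'' : ↥(kerAt f'' (ψ₁ (φ₁ (f' e'))))) (a : M) (a' : N'),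
      ψ a = a''.1 → φ₁ a' = f a → δ a'' = π' a' := by
    intro a'' a a' ha ha'
    simp only [hδdef]
    set b := Function.surjInv hψs a''.1 with hbdef
    set b' := Function.invFun φ₁ (f b) with hb'def
    have hb : ψ b = a''.1 := hlift _
    have hb' : φ₁ b' = f b := hinv _ (hfmem a'')
    have h1 : ψ (μM.bkt a b (φ e')) = m'' := by
      rw [hψ.1, ha, hb, hψφ, μM''.bkt_idl]
    obtain ⟨c, hc⟩ := hψmem _ h1
    have h3 : μN'.bkt a' b' (f' e') = f' c := by
      apply hφ₁i
      rw [hφ₁.1, ha', hb', ← hsq1' c, hc, hf.1, hsq1' e']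
    exact (hπ'congr a' b' ⟨f' e', ⟨e', rfl⟩, ⟨c, h3.symm⟩⟩).symm
  have hδlift : ∀ a'' : ↥(kerAt f'' (ψ₁ (φ₁ (f' e')))), ∃ (a : M) (a' : N'),
      ψ a = a''.1 ∧ φ₁ a' = f a := fun a'' =>
    ⟨Function.surjInv hψs a''.1, Function.invFun φ₁ (f (Function.surjInv hψs a''.1)),
      hlift _, hinv _ (hfmem a'')⟩
  refine ⟨hK', hK, hK'', hmφ, hmψ, φ₂, ψ₂, δ,
    ⟨fun a b c => Subtype.ext (hφ.1 _ _ _), fun t m => Subtype.ext (hφ.2 _ _)⟩,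
    ⟨fun a b c => Subtype.ext (hψ.1 _ _ _), fun t m => Subtype.ext (hψ.2 _ _)⟩,
    ?_, ?_, ?_, funext fun n' => hφ₂π' n', funext fun n => hψ₂π n, hδspec, ?_, ?_, ?_, ?_⟩
  · -- φ₂ hom
    constructor
    · intro a b c
      obtain ⟨x, rfl⟩ := hπ's a
      obtain ⟨y, rfl⟩ := hπ's b
      obtain ⟨z, rfl⟩ := hπ's c
      calc φ₂ (μQ'.bkt (π' x) (π' y) (π' z)) = φ₂ (π' (μN'.bkt x y z)) := by
            rw [hq'.1.1]
        _ = π (φ₁ (μN'.bkt x y z)) := hφ₂π' _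
        _ = π (μN.bkt (φ₁ x) (φ₁ y) (φ₁ z)) := by rw [hφ₁.1]
        _ = μQ.bkt (π (φ₁ x)) (π (φ₁ y)) (π (φ₁ z)) := hq.1.1 _ _ _
        _ = μQ.bkt (φ₂ (π' x)) (φ₂ (π' y)) (φ₂ (π' z)) := by
            rw [hφ₂π' x, hφ₂π' y, hφ₂π' z]
    · intro t m
      obtain ⟨x, rfl⟩ := hπ's m
      calc φ₂ (μQ'.smul t (π' x)) = φ₂ (π' (μN'.smul t x)) := by rw [hq'.1.2]
        _ = π (φ₁ (μN'.smul t x)) := hφ₂π' _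
        _ = π (μN.smul t (φ₁ x)) := by rw [hφ₁.2]
        _ = μQ.smul t (π (φ₁ x)) := hq.1.2 _ _
        _ = μQ.smul t (φ₂ (π' x)) := by rw [hφ₂π' x]
  · -- ψ₂ hom
    constructor
    · intro a b c
      obtain ⟨x, rfl⟩ := hπs a
      obtain ⟨y, rfl⟩ := hπs b
      obtain ⟨z, rfl⟩ := hπs c
      calc ψ₂ (μQ.bkt (π x) (π y) (π z)) = ψ₂ (π (μN.bkt x y z)) := by rw [hq.1.1]
        _ = π'' (ψ₁ (μN.bkt x y z)) := hψ₂π _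
        _ = π'' (μN''.bkt (ψ₁ x) (ψ₁ y) (ψ₁ z)) := by rw [hψ₁.1]
        _ = μQ''.bkt (π'' (ψ₁ x)) (π'' (ψ₁ y)) (π'' (ψ₁ z)) := hq''.1.1 _ _ _
        _ = μQ''.bkt (ψ₂ (π x)) (ψ₂ (π y)) (ψ₂ (π z)) := by
            rw [hψ₂π x, hψ₂π y, hψ₂π z]
    · intro t m
      obtain ⟨x, rfl⟩ := hπs m
      calc ψ₂ (μQ.smul t (π x)) = ψ₂ (π (μN.smul t x)) := by rw [hq.1.2]
        _ = π'' (ψ₁ (μN.smul t x)) := hψ₂π _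
        _ = π'' (μN''.smul t (ψ₁ x)) := by rw [hψ₁.2]
        _ = μQ''.smul t (π'' (ψ₁ x)) := hq''.1.2 _ _
        _ = μQ''.smul t (ψ₂ (π x)) := by rw [hψ₂π x]
  · -- δ hom
    constructor
    · intro a b c
      obtain ⟨xa, xa', hxa, hxa'⟩ := hδlift a
      obtain ⟨xb, xb', hxb, hxb'⟩ := hδlift b
      obtain ⟨xc, xc', hxc, hxc'⟩ := hδlift c
      have h1 : ψ (μM.bkt xa xb xc) =
          ((TMod.sub μM'' _ hK'').bkt a b c).1 := by
        rw [hψ.1, hxa, hxb, hxc]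
        exact rfl
      have h2 : φ₁ (μN'.bkt xa' xb' xc') = f (μM.bkt xa xb xc) := by
        rw [hφ₁.1, hxa', hxb', hxc', hf.1]
      rw [hδspec _ _ _ h1 h2, hδspec _ _ _ hxa hxa', hδspec _ _ _ hxb hxb',
        hδspec _ _ _ hxc hxc', hq'.1.1]
    · intro t m
      obtain ⟨x, x', hx, hx'⟩ := hδlift m
      have h1 : ψ (μM.smul t x) = ((TMod.sub μM'' _ hK'').smul t m).1 := by
        rw [hψ.2, hx]
        exact rfl
      have h2 : φ₁ (μN'.smul t x') = f (μM.smul t x) := by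
        rw [hφ₁.2, hx', hf.2]
      rw [hδspec _ _ _ h1 h2, hδspec _ _ _ hx hx', hq'.1.2]
  · -- exactness at ker f
    refine ⟨show f'' (ψ (φ e')) = _ by rw [hsq2', hsq1'], ?_⟩
    ext x
    constructor
    · rintro ⟨y, rfl⟩
      have h : ψ (φ y.1) = ψ (φ e') := by rw [hψφ, hψφ]
      exact Subtype.ext h
    · intro hx
      have hx' : ψ x.1 = ψ (φ e') := congrArg Subtype.val hx
      obtain ⟨c, hc⟩ := hψmem x.1 (by rw [hx', hψφ])
      have hcK : c ∈ kerAt f' (f' e') := by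
        show f' c = f' e'
        apply hφ₁i
        rw [← hsq1' c, hc, show f x.1 = _ from x.2]
      exact ⟨⟨c, hcK⟩, Subtype.ext hc⟩
  · -- exactness at ker f''
    rintro s' ⟨x0, rfl⟩
    ext a''
    constructor
    · rintro ⟨⟨m, hm⟩, rfl⟩
      show δ _ = π' (f' x0)
      rw [hδspec _ m (f' e') rfl (show f m = _ from hm).symm]
      exact hπ'const e' x0
    · intro ha
      obtain ⟨b, b', hb, hb'⟩ := hδlift a''
      have hδb : δ a'' = π' b' := hδspec _ _ _ hb hb'
      have hcong : π' b' = π' (f' x0) := by rw [← hδb]; exact ha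
      obtain ⟨s, ⟨u, rfl⟩, v, hv⟩ := (hq'.2.2 _ _).mp hcong
      have hb'w : b' = f' (μM'.bkt v u x0) := by
        rw [hf'.1]
        exact heap_solve μN' hv.symm
      have hmK : μM.bkt b (φ (μM'.bkt v u x0)) (φ e') ∈ kerAt f (φ₁ (f' e')) := by
        show f _ = _
        rw [hf.1, hsq1' (μM'.bkt v u x0), ← hb'w, ← hb', hsq1' e', μN.bkt_idl]
      refine ⟨⟨μM.bkt b (φ (μM'.bkt v u x0)) (φ e'), hmK⟩, ?_⟩
      apply Subtype.ext
      show ψ (μM.bkt b (φ (μM'.bkt v u x0)) (φ e')) = a''.1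
      rw [hψ.1, hb, hψφ, hψφ, μM''.bkt_idr]
  · -- exactness at N'/Im f'
    rintro s ⟨a₀, rfl⟩
    ext q'
    constructor
    · rintro ⟨a'', rfl⟩
      show φ₂ (δ a'') = π (f a₀)
      obtain ⟨b, b', hb, hb'⟩ := hδlift a''
      rw [hδspec _ _ _ hb hb', hφ₂π', hb']
      exact hπconst b a₀
    · intro hqk
      obtain ⟨a', rfl⟩ := hπ's q'
      have hqk' : π (φ₁ a') = π (f a₀) := by rw [← hφ₂π']; exact hqk
      obtain ⟨s, ⟨u, rfl⟩, v, hv⟩ := (hq.2.2 _ _).mp hqk'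
      have ha : φ₁ a' = f (μM.bkt v u a₀) := by
        rw [hf.1]
        exact heap_solve μN hv.symm
      have hmem'' : ψ (μM.bkt v u a₀) ∈ kerAt f'' (ψ₁ (φ₁ (f' e'))) := by
        show f'' _ = _
        rw [hsq2', ← ha, hψ₁φ₁, hψ₁φ₁]
      exact ⟨⟨_, hmem''⟩, hδspec _ _ _ rfl ha⟩
  · -- exactness at N/Im f
    rintro s'' ⟨c₀, rfl⟩
    ext q
    constructor
    · rintro ⟨q', rfl⟩
      obtain ⟨a', rfl⟩ := hπ's q'
      show ψ₂ (φ₂ (π' a')) = π'' (f'' c₀)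
      rw [hφ₂π', hψ₂π, hψ₁φ₁]
      have hn'' : n'' = f'' (ψ (φ e')) := by rw [hsq2', hsq1', hψ₁φ₁]
      rw [hn'']
      exact hπ''const _ _
    · intro hqk
      obtain ⟨n, rfl⟩ := hπs q
      have h1 : π'' (ψ₁ n) = π'' (f'' c₀) := by rw [← hψ₂π]; exact hqk
      obtain ⟨s, ⟨u'', rfl⟩, w'', hw⟩ := (hq''.2.2 _ _).mp h1
      have hd : ψ₁ n = f'' (μM''.bkt w'' u'' c₀) := by
        rw [hf''.1]
        exact heap_solve μN'' hw.symm
      obtain ⟨b, hbb⟩ := hψs (μM''.bkt w'' u'' c₀)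
      have hd2 : ψ₁ n = ψ₁ (f b) := by rw [hd, ← hbb, hsq2']
      have hker : μN.bkt n (f b) (φ₁ (f' e')) ∈ Set.range φ₁ := by
        apply hψ₁mem
        rw [hψ₁.1, ← hd2, hψ₁φ₁, μN''.bkt_idl]
      obtain ⟨a', ha'⟩ := hker
      refine ⟨π' a', ?_⟩
      rw [hφ₂π']
      apply hπcongr
      refine ⟨f (φ e'), ⟨φ e', rfl⟩, ⟨μM.bkt (φ e') b (φ e'), ?_⟩⟩
      rw [hf.1, hsq1' e', ha', μN.bkt_comm n (f b) (φ₁ (f' e')), μN.bkt_assoc,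
        μN.bkt_idl]
end

section
/- Let T be a truss and consider a commutative diagram of left T-modules with rows M'→φ→M→ψ→M''→⋆ and ⋆⇢N'→φ₁→N→ψ₁→N'', and vertical morphisms f':M'→N', f:M→N, f'':M''→N'' with f∘φ=φ₁∘f' and f''∘ψ=ψ₁∘f, where ψ is surjective, φ₁ is injective, there exists m''∈Im ψ with Im φ=ker_{m''}ψ, and there exists n''∈Im ψ₁ with Im φ₁=ker_{n''}ψ₁. Assume Abs(M') is nonempty. If f' and f'' are injective, then f is injective. -/
/-- if `f'` and `f''` are injective, so is `f`. -/
theorem stmt9 {T M' M M'' N' N N'' : Type*} (τ : Truss T)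
    (μM' : TMod τ M') (μM : TMod τ M) (μM'' : TMod τ M'')
    (μN' : TMod τ N') (μN : TMod τ N) (μN'' : TMod τ N'')
    (φ : M' → M) (ψ : M → M'') (φ₁ : N' → N) (ψ₁ : N → N'')
    (f' : M' → N') (f : M → N) (f'' : M'' → N'')
    (hφ : IsTModHom μM' μM φ) (hψ : IsTModHom μM μM'' ψ)
    (hφ₁ : IsTModHom μN' μN φ₁) (hψ₁ : IsTModHom μN μN'' ψ₁)
    (hf' : IsTModHom μM' μN' f') (hf : IsTModHom μM μN f)
    (hf'' : IsTModHom μM'' μN'' f'')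
    (hsq1 : f ∘ φ = φ₁ ∘ f') (hsq2 : f'' ∘ ψ = ψ₁ ∘ f)
    (hψs : Function.Surjective ψ) (hφ₁i : Function.Injective φ₁)
    (hrow1 : ∃ m'' ∈ Set.range ψ, Set.range φ = kerAt ψ m'')
    (hrow2 : ∃ n'' ∈ Set.range ψ₁, Set.range φ₁ = kerAt ψ₁ n'')
    (habs : (Abs μM').Nonempty)
    (hf'i : Function.Injective f') (hf''i : Function.Injective f'') :
    Function.Injective f := by
  obtain ⟨a', _⟩ := habs
  obtain ⟨m₀, -, hker1⟩ := hrow1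
  intro x y hxy
  -- ψ x = ψ y
  have hψxy : ψ x = ψ y := by
    apply hf''i
    have h1 := congrFun hsq2 x
    have h2 := congrFun hsq2 y
    simp only [Function.comp] at h1 h2
    rw [h1, h2, hxy]
  -- φ a' is in ker ψ over m₀
  have hφa : ψ (φ a') = m₀ := by
    have : φ a' ∈ Set.range φ := ⟨a', rfl⟩
    rw [hker1] at this; exact this
  set z := μM.bkt x y (φ a') with hz
  have hψz : ψ z = m₀ := by
    rw [hz, hψ.1, hψxy, μM''.bkt_idl, hφa]
  have hzrange : z ∈ Set.range φ := by rw [hker1]; exact hψz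
  obtain ⟨w, hw⟩ := hzrange
  -- f z = φ₁ (f' a')
  have hfz : f z = φ₁ (f' a') := by
    rw [hz, hf.1, hxy, μN.bkt_idl]
    exact congrFun hsq1 a'
  have hfw : f (φ w) = φ₁ (f' w) := congrFun hsq1 w
  have : f' w = f' a' := hφ₁i (by rw [← hfw, hw, hfz])
  have hwa : w = a' := hf'i this
  -- z = φ a', so bkt x y (φ a') = φ a', hence x = y
  have hzeq : μM.bkt x y (φ a') = φ a' := by rw [← hz, ← hw, hwa]
  calc x = μM.bkt x y (μM.bkt (φ a') (φ a') y) := by rw [μM.bkt_idl, μM.bkt_idr]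
    _ = μM.bkt (μM.bkt x y (φ a')) (φ a') y := by rw [μM.bkt_assoc]
    _ = y := by rw [hzeq, μM.bkt_idl]
end

section
/- Let T be a truss and consider a commutative square of left T-modules: rows A'→φ₁→A→ψ₁→A''→⋆ and B'→φ₂→B→ψ₂→B''→⋆ with ψ₁, ψ₂ surjective, there exists a''∈Im ψ₁ with Im φ₁=ker_{a''}ψ₁, there exists b''∈Im ψ₂ with Im φ₂=ker_{b''}ψ₂, and vertical morphisms f:A'→B', g:A→B satisfying g∘φ₁=φ₂∘f. Then there exists a unique morphism of T-modules h:A''→B'' such that h∘ψ₁=ψ₂∘g. Moreover, if f and g are isomorphisms (bijective morphisms), then h is an isomorphism. -/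
private theorem cancel {T M : Type*} {τ : Truss T} (μ : TMod τ M) (x y z : M)
    (hxyz : μ.bkt x y z = z) : x = y := by
  calc x = μ.bkt (μ.bkt x y z) z y := by rw [μ.bkt_assoc, μ.bkt_idl, μ.bkt_idr]
  _ = μ.bkt z z y := by rw [hxyz]
  _ = y := μ.bkt_idl y z

/-- induced morphism on the right ends of two exact rows. -/
theorem stmt11 {T A' A A'' B' B B'' : Type*} (τ : Truss T)
    (μA' : TMod τ A') (μA : TMod τ A) (μA'' : TMod τ A'')
    (μB' : TMod τ B') (μB : TMod τ B) (μB'' : TMod τ B'')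
    (φ₁ : A' → A) (ψ₁ : A → A'') (φ₂ : B' → B) (ψ₂ : B → B'')
    (f : A' → B') (g : A → B)
    (hφ₁ : IsTModHom μA' μA φ₁) (hψ₁ : IsTModHom μA μA'' ψ₁)
    (hφ₂ : IsTModHom μB' μB φ₂) (hψ₂ : IsTModHom μB μB'' ψ₂)
    (hfh : IsTModHom μA' μB' f) (hgh : IsTModHom μA μB g)
    (hψ₁s : Function.Surjective ψ₁) (hψ₂s : Function.Surjective ψ₂)
    (hrow1 : ∃ a'' ∈ Set.range ψ₁, Set.range φ₁ = kerAt ψ₁ a'')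
    (hrow2 : ∃ b'' ∈ Set.range ψ₂, Set.range φ₂ = kerAt ψ₂ b'')
    (hsq : g ∘ φ₁ = φ₂ ∘ f) :
    (∃! h : A'' → B'', IsTModHom μA'' μB'' h ∧ h ∘ ψ₁ = ψ₂ ∘ g) ∧
    (Function.Bijective f → Function.Bijective g →
      ∀ h : A'' → B'', IsTModHom μA'' μB'' h → h ∘ ψ₁ = ψ₂ ∘ g →
        Function.Bijective h) := by

  classical
  obtain ⟨a''₀, ⟨a₀, ha₀⟩, hker1⟩ := hrow1
  obtain ⟨b''₀, hb''₀, hker2⟩ := hrow2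
  have ha₀mem : a₀ ∈ Set.range φ₁ := by rw [hker1]; exact ha₀
  obtain ⟨a'₀, ha'₀⟩ := ha₀mem
  have hga₀ : ψ₂ (g a₀) = b''₀ := by
    have h3 : g a₀ = φ₂ (f a'₀) := by rw [← ha'₀]; exact congrFun hsq a'₀
    have hmem : g a₀ ∈ Set.range φ₂ := ⟨f a'₀, h3.symm⟩
    rw [hker2] at hmem; exact hmem
  have key : ∀ a b : A, ψ₁ a = ψ₁ b → ψ₂ (g a) = ψ₂ (g b) := by
    intro a b hab
    have h1 : ψ₁ (μA.bkt a b a₀) = a''₀ := by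
      rw [hψ₁.1, hab, μA''.bkt_idl, ha₀]
    have h2 : μA.bkt a b a₀ ∈ Set.range φ₁ := by rw [hker1]; exact h1
    obtain ⟨a', ha'⟩ := h2
    have h3 : g (μA.bkt a b a₀) = φ₂ (f a') := by rw [← ha']; exact congrFun hsq a'
    have h4 : ψ₂ (g (μA.bkt a b a₀)) = b''₀ := by
      have hmem : g (μA.bkt a b a₀) ∈ Set.range φ₂ := ⟨f a', h3.symm⟩
      rw [hker2] at hmem; exact hmem
    rw [hgh.1, hψ₂.1, hga₀] at h4
    exact cancel μB'' _ _ _ h4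
  set h : A'' → B'' := fun u => ψ₂ (g (hψ₁s u).choose) with hdef
  have hcomm : ∀ a : A, h (ψ₁ a) = ψ₂ (g a) := fun a => key _ _ ((hψ₁s (ψ₁ a)).choose_spec)
  have hhom : IsTModHom μA'' μB'' h := by
    constructor
    · intro u v w
      obtain ⟨a, rfl⟩ := hψ₁s u
      obtain ⟨b, rfl⟩ := hψ₁s v
      obtain ⟨c, rfl⟩ := hψ₁s w
      rw [← hψ₁.1, hcomm, hcomm, hcomm, hcomm, hgh.1, hψ₂.1]
    · intro t u
      obtain ⟨a, rfl⟩ := hψ₁s u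
      rw [← hψ₁.2, hcomm, hcomm, hgh.2, hψ₂.2]
  constructor
  · refine ⟨h, ⟨hhom, funext hcomm⟩, ?_⟩
    intro h' ⟨_, hc'⟩
    funext u
    obtain ⟨a, rfl⟩ := hψ₁s u
    calc h' (ψ₁ a) = ψ₂ (g a) := congrFun hc' a
    _ = h (ψ₁ a) := (hcomm a).symm
  · intro hf hg h' hh' hc'
    constructor
    · intro u v huv
      obtain ⟨a, rfl⟩ := hψ₁s u
      obtain ⟨b, rfl⟩ := hψ₁s v
      have ca : h' (ψ₁ a) = ψ₂ (g a) := congrFun hc' a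
      have cb : h' (ψ₁ b) = ψ₂ (g b) := congrFun hc' b
      have hab : ψ₂ (g a) = ψ₂ (g b) := by rw [← ca, ← cb]; exact huv
      have h1 : ψ₂ (g (μA.bkt a b a₀)) = b''₀ := by
        rw [hgh.1, hψ₂.1, hab, μB''.bkt_idl, hga₀]
      have h2 : g (μA.bkt a b a₀) ∈ Set.range φ₂ := by rw [hker2]; exact h1
      obtain ⟨b', hb'⟩ := h2
      obtain ⟨a', rfl⟩ := hf.2 b'
      have h3 : g (μA.bkt a b a₀) = g (φ₁ a') := by
        rw [← hb']; exact (congrFun hsq a').symm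
      have h4 : μA.bkt a b a₀ = φ₁ a' := hg.1 h3
      have h5 : μA.bkt a b a₀ ∈ Set.range φ₁ := ⟨a', h4.symm⟩
      rw [hker1] at h5
      have h6 : μA''.bkt (ψ₁ a) (ψ₁ b) (ψ₁ a₀) = a''₀ := by rw [← hψ₁.1]; exact h5
      rw [ha₀] at h6
      exact cancel μA'' _ _ _ h6
    · intro b''
      obtain ⟨b, rfl⟩ := hψ₂s b''
      obtain ⟨a, rfl⟩ := hg.2 b
      exact ⟨ψ₁ a, congrFun hc' a⟩
end

section
/- Let T be a truss and consider a commutative square of left T-modules: rows ⋆⇢A'→φ₁→A→ψ₁→A'' and ⋆⇢B'→φ₂→B→ψ₂→B'' with φ₁, φ₂ injective, vertical morphisms f:A→B, g:A''→B'' satisfying ψ₂∘f=g∘ψ₁, and elements a''∈A'', b''∈B'' such that g(a'')=b'', Im φ₁=ker_{a''}ψ₁ and Im φ₂=ker_{b''}ψ₂. Then there exists a unique morphism of T-modules h:A'→B' such that φ₂∘h=f∘φ₁. Moreover, if f and g are isomorphisms (bijective morphisms), then h is an isomorphism. -/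
/-- induced morphism on the left ends of two exact rows. -/
theorem stmt12 {T A' A A'' B' B B'' : Type*} (τ : Truss T)
    (μA' : TMod τ A') (μA : TMod τ A) (μA'' : TMod τ A'')
    (μB' : TMod τ B') (μB : TMod τ B) (μB'' : TMod τ B'')
    (φ₁ : A' → A) (ψ₁ : A → A'') (φ₂ : B' → B) (ψ₂ : B → B'')
    (f : A → B) (g : A'' → B'')
    (hφ₁ : IsTModHom μA' μA φ₁) (hψ₁ : IsTModHom μA μA'' ψ₁)
    (hφ₂ : IsTModHom μB' μB φ₂) (hψ₂ : IsTModHom μB μB'' ψ₂)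
    (hfh : IsTModHom μA μB f) (hgh : IsTModHom μA'' μB'' g)
    (hφ₁i : Function.Injective φ₁) (hφ₂i : Function.Injective φ₂)
    (hsq : ψ₂ ∘ f = g ∘ ψ₁)
    (a'' : A'') (b'' : B'') (hab : g a'' = b'')
    (hrow1 : Set.range φ₁ = kerAt ψ₁ a'')
    (hrow2 : Set.range φ₂ = kerAt ψ₂ b'') :
    (∃! h : A' → B', IsTModHom μA' μB' h ∧ φ₂ ∘ h = f ∘ φ₁) ∧
    (Function.Bijective f → Function.Bijective g →
      ∀ h : A' → B', IsTModHom μA' μB' h → φ₂ ∘ h = f ∘ φ₁ →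
        Function.Bijective h) := by

  -- key: f ∘ φ₁ lands in range φ₂
  have hmem : ∀ a' : A', f (φ₁ a') ∈ Set.range φ₂ := by
    intro a'
    rw [hrow2]
    have h1 : φ₁ a' ∈ kerAt ψ₁ a'' := by rw [← hrow1]; exact ⟨a', rfl⟩
    show ψ₂ (f (φ₁ a')) = b''
    have := congrFun hsq (φ₁ a')
    simp only [Function.comp] at this
    rw [this, h1, hab]
  choose h hh using hmem
  have hcomm : φ₂ ∘ h = f ∘ φ₁ := funext hh
  have hhom : IsTModHom μA' μB' h := by
    constructor
    · intro a b c
      apply hφ₂i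
      rw [hh, hφ₂.1, hh, hh, hh, hφ₁.1, hfh.1]
    · intro t m
      apply hφ₂i
      rw [hh, hφ₂.2, hh, hφ₁.2, hfh.2]
  refine ⟨⟨h, ⟨hhom, hcomm⟩, ?_⟩, ?_⟩
  · rintro h' ⟨-, hc'⟩
    funext a'
    apply hφ₂i
    rw [hh]
    exact congrFun hc' a'
  · intro hf hg h' hh' hc'
    constructor
    · intro x y hxy
      apply hφ₁i
      apply hf.1
      have := congrFun hc'
      simp only [Function.comp] at this
      rw [← this, ← this, hxy]
    · intro b'
      obtain ⟨a, ha⟩ := hf.2 (φ₂ b')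
      have haker : ψ₁ a = a'' := by
        apply hg.1
        have := congrFun hsq a
        simp only [Function.comp] at this
        rw [← this, ha, hab]
        have : φ₂ b' ∈ kerAt ψ₂ b'' := by rw [← hrow2]; exact ⟨b', rfl⟩
        exact this
      have : a ∈ Set.range φ₁ := by rw [hrow1]; exact haker
      obtain ⟨a', ha'⟩ := this
      refine ⟨a', hφ₂i ?_⟩
      have := congrFun hc' a'
      simp only [Function.comp] at this
      rw [this, ha', ha]
end

section
/- (Nine Lemma) Let T be a truss and consider a commutative 3×3 diagram of left T-modules with rows ⋆⇢A'→f'→B'→g'→C'→⋆, ⋆⇢A→f→B→g→C→⋆, ⋆⇢A''→f''→B''→g''→C''→⋆, each short exact (the left map is injective, the right map is surjective, and there exist e'∈Im g', e∈Im g, e''∈Im g'' with Im f'=ker_{e'}g', Im f=ker_e g, Im f''=ker_{e''}g''), and columns α':A'→A, α:A→A'', β':B'→B, β:B→B'', γ':C'→C, γ:C→C'' such that all squares commute. Assume the middle column is short exact: β' is injective, β is surjective, and there exists t''∈Im β with Im β'=ker_{t''}β. Then the last column is short exact (γ' injective, γ surjective, and Im γ'=ker_{u''}γ for some u''∈Im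 γ) if and only if the first column is short exact (α' injective, α surjective, and Im α'=ker_{s''}α for some s''∈Im α). -/
theorem TMod.recov {T M : Type*} {τ : Truss T} (μ : TMod τ M) (b p o : M) :
    μ.bkt (μ.bkt b p o) o p = b := by
  rw [μ.bkt_assoc, μ.bkt_idl, μ.bkt_idr]

theorem TMod.inj_of_ker {T M N : Type*} {τ : Truss T} (μM : TMod τ M) (μN : TMod τ N)
    {F : M → N} (hF : IsTModHom μM μN F) (o : M) (h : ∀ x, F x = F o → x = o) :
    Function.Injective F := by
  intro x y hxy
  have hw : F (μM.bkt x y o) = F o := by rw [hF.1, hxy, μN.bkt_idl]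
  have h1 : μM.bkt x y o = o := h _ hw
  have h2 := congrArg (fun z => μM.bkt z o y) h1
  simpa [μM.bkt_assoc, μM.bkt_idl, μM.bkt_idr] using h2

/-- Nine Lemma for modules over trusses. -/
theorem stmt13 {T A' B' C' A B C A'' B'' C'' : Type*} (τ : Truss T)
    (μA' : TMod τ A') (μB' : TMod τ B') (μC' : TMod τ C')
    (μA : TMod τ A) (μB : TMod τ B) (μC : TMod τ C)
    (μA'' : TMod τ A'') (μB'' : TMod τ B'') (μC'' : TMod τ C'')
    (f' : A' → B') (g' : B' → C') (f : A → B) (g : B → C)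
    (f'' : A'' → B'') (g'' : B'' → C'')
    (α' : A' → A) (α : A → A'') (β' : B' → B) (β : B → B'')
    (γ' : C' → C) (γ : C → C'')
    (hf' : IsTModHom μA' μB' f') (hg' : IsTModHom μB' μC' g')
    (hf : IsTModHom μA μB f) (hg : IsTModHom μB μC g)
    (hf'' : IsTModHom μA'' μB'' f'') (hg'' : IsTModHom μB'' μC'' g'')
    (hα' : IsTModHom μA' μA α') (hα : IsTModHom μA μA'' α)
    (hβ' : IsTModHom μB' μB β') (hβ : IsTModHom μB μB'' β)
    (hγ' : IsTModHom μC' μC γ') (hγ : IsTModHom μC μC'' γ)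
    (hsq1 : f ∘ α' = β' ∘ f') (hsq2 : g ∘ β' = γ' ∘ g')
    (hsq3 : f'' ∘ α = β ∘ f) (hsq4 : g'' ∘ β = γ ∘ g)
    (hrow1 : IsShortExactSeq f' g') (hrow2 : IsShortExactSeq f g)
    (hrow3 : IsShortExactSeq f'' g'')
    (hmid : IsShortExactSeq β' β) :
    IsShortExactSeq γ' γ ↔ IsShortExactSeq α' α := by
  obtain ⟨hf'i, hg's, e', he', hk1⟩ := hrow1
  obtain ⟨hfi, hgs, e, he, hk2⟩ := hrow2
  obtain ⟨hf''i, hg''s, e'', he'', hk3⟩ := hrow3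
  obtain ⟨hβ'i, hβs, t'', ht'', hkm⟩ := hmid
  have s1 : ∀ x, f (α' x) = β' (f' x) := fun x => congrFun hsq1 x
  have s2 : ∀ x, g (β' x) = γ' (g' x) := fun x => congrFun hsq2 x
  have s3 : ∀ x, f'' (α x) = β (f x) := fun x => congrFun hsq3 x
  have s4 : ∀ x, g'' (β x) = γ (g x) := fun x => congrFun hsq4 x
  -- basepoint in A'
  obtain ⟨b1', hb1'⟩ := he'
  have hb1m : b1' ∈ Set.range f' := by rw [hk1]; exact hb1'
  obtain ⟨a0', -⟩ := hb1m
  -- kernel-point facts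
  have ke'f : ∀ x, g' (f' x) = e' := by
    intro x
    have : f' x ∈ kerAt g' e' := by rw [← hk1]; exact ⟨x, rfl⟩
    exact this
  have kef : ∀ x, g (f x) = e := by
    intro x
    have : f x ∈ kerAt g e := by rw [← hk2]; exact ⟨x, rfl⟩
    exact this
  have ke''f : ∀ x, g'' (f'' x) = e'' := by
    intro x
    have : f'' x ∈ kerAt g'' e'' := by rw [← hk3]; exact ⟨x, rfl⟩
    exact this
  have kt : ∀ x, β (β' x) = t'' := by
    intro x
    have : β' x ∈ kerAt β t'' := by rw [← hkm]; exact ⟨x, rfl⟩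
    exact this
  have ke' : g' (f' a0') = e' := ke'f a0'
  have ke : g (f (α' a0')) = e := kef (α' a0')
  have kt0 : β (f (α' a0')) = t'' := by rw [s1]; exact kt (f' a0')
  constructor
  · -- third column exact → first column exact
    rintro ⟨hγ'i, hγs, u'', hu'', hkγ⟩
    have ku'' : γ (g (f (α' a0'))) = u'' := by
      have hm : g (f (α' a0')) ∈ Set.range γ' := by
        refine ⟨g' (f' a0'), ?_⟩
        rw [← s2, ← s1]
      have : g (f (α' a0')) ∈ kerAt γ u'' := by rw [← hkγ]; exact hm
      exact this
    have hu''e : u'' = e'' := by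
      rw [← ku'', ← s4, ← s3, ke''f]
    refine ⟨?_, ?_, α (α' a0'), ⟨α' a0', rfl⟩, ?_⟩
    · -- α' injective
      intro a b h
      have hfb : β' (f' a) = β' (f' b) := by rw [← s1, ← s1, h]
      exact hf'i (hβ'i hfb)
    · -- α surjective
      intro a''
      obtain ⟨b, hb⟩ := hβs (f'' a'')
      have h1 : γ (g b) = u'' := by rw [← s4, hb, ke''f, hu''e]
      have h2 : g b ∈ Set.range γ' := by rw [hkγ]; exact h1
      obtain ⟨c', hc'⟩ := h2
      obtain ⟨b', hb'⟩ := hg's c'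
      have h3 : g (μB.bkt b (β' b') (f (α' a0'))) = e := by
        have hgb : g b = g (β' b') := by rw [s2, hb', hc']
        rw [hg.1, hgb, μC.bkt_idl, ke]
      have h4 : μB.bkt b (β' b') (f (α' a0')) ∈ Set.range f := by rw [hk2]; exact h3
      obtain ⟨a, ha⟩ := h4
      have h5 : β b = β (f a) := by
        conv_lhs => rw [← μB.recov b (β' b') (f (α' a0'))]
        rw [← ha, hβ.1, kt0, kt b', μB''.bkt_idr]
      have h6 : f'' a'' = f'' (α a) := by rw [s3, ← h5]; exact hb.symm
      exact ⟨a, (hf''i h6).symm⟩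
    · -- range α' = ker α
      ext a
      constructor
      · rintro ⟨a', rfl⟩
        show α (α' a') = α (α' a0')
        have h1 : f'' (α (α' a')) = f'' (α (α' a0')) := by
          rw [s3 (α' a'), s3 (α' a0'), s1 a', kt (f' a'), kt0]
        exact hf''i h1
      · intro h
        have h0 : α a = α (α' a0') := h
        have h1 : β (f a) = t'' := by rw [← s3, h0, s3]; exact kt0
        have h2 : f a ∈ Set.range β' := by rw [hkm]; exact h1
        obtain ⟨b', hb'⟩ := h2
        have hga : g (f a) = e := kef a
        have h3 : γ' (g' b') = γ' (g' (f' a0')) := by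
          rw [← s2 b', hb', hga, ← s2 (f' a0'), ← s1 a0', ke]
        have h4 : g' b' = g' (f' a0') := hγ'i h3
        have h5 : b' ∈ Set.range f' := by
          rw [hk1]
          show g' b' = e'
          rw [h4, ke']
        obtain ⟨a1', ha1'⟩ := h5
        refine ⟨a1', hfi ?_⟩
        rw [s1, ha1', hb']
  · -- first column exact → third column exact
    rintro ⟨hα'i, hαs, s'', hs'', hkα⟩
    have ks'' : α (α' a0') = s'' := by
      have : α' a0' ∈ kerAt α s'' := by rw [← hkα]; exact ⟨a0', rfl⟩
      exact this
    refine ⟨?_, ?_, γ (g (f (α' a0'))), ⟨g (f (α' a0')), rfl⟩, ?_⟩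
    · -- γ' injective
      refine TMod.inj_of_ker μC' μC hγ' (g' (f' a0')) ?_
      intro c' h
      obtain ⟨b', hb'⟩ := hg's c'
      have h1 : g (β' b') = e := by rw [s2, hb', h, ← s2, ← s1]; exact ke
      have h2 : β' b' ∈ Set.range f := by rw [hk2]; exact h1
      obtain ⟨a, ha⟩ := h2
      have h3 : f'' (α a) = f'' s'' := by
        rw [s3, ha, kt, ← ks'', s3, kt0]
      have h4 : a ∈ Set.range α' := by
        rw [hkα]
        show α a = s''
        exact hf''i h3
      obtain ⟨a1', ha1'⟩ := h4
      have h6 : b' = f' a1' := hβ'i (by rw [← s1, ha1']; exact ha.symm)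
      have h7 : g' (f' a1') = e' := ke'f a1'
      rw [← hb', h6, h7, ← ke']
    · -- γ surjective
      intro c''
      obtain ⟨b'', hb''⟩ := hg''s c''
      obtain ⟨b, hb⟩ := hβs b''
      exact ⟨g b, by rw [← s4, hb, hb'']⟩
    · -- range γ' = ker γ
      ext c
      constructor
      · rintro ⟨c', rfl⟩
        show γ (γ' c') = γ (g (f (α' a0')))
        obtain ⟨b', hb'⟩ := hg's c'
        rw [← hb', ← s2, ← s4 (β' b'), kt b', ← s4 (f (α' a0')), kt0]
      · intro hc
        have hc0 : γ c = γ (g (f (α' a0'))) := hc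
        obtain ⟨b, hb⟩ := hgs c
        have h1 : g'' (β b) = e'' := by
          rw [s4, hb, hc0, ← s4, ← s3, ke''f]
        have h2 : β b ∈ Set.range f'' := by rw [hk3]; exact h1
        obtain ⟨a'', ha''⟩ := h2
        obtain ⟨a, ha⟩ := hαs a''
        have h3 : β b = β (f a) := by rw [← ha'', ← ha, s3]
        have h4 : β (μB.bkt b (f a) (f (α' a0'))) = t'' := by
          rw [hβ.1, ← h3, μB''.bkt_idl, kt0]
        have h5 : μB.bkt b (f a) (f (α' a0')) ∈ Set.range β' := by rw [hkm]; exact h4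
        obtain ⟨b', hb'⟩ := h5
        refine ⟨g' b', ?_⟩
        rw [← s2, hb', hg.1, kef a, ke, μC.bkt_idr]
        exact hb
end

section
/- (Five Lemma, injectivity) Let T be a truss and consider a commutative diagram of left T-modules with rows A→φ₁→B→φ₂→C→φ₃→D→φ₄→E and A'→ψ₁→B'→ψ₂→C'→ψ₃→D'→ψ₄→E' and vertical morphisms α:A→A', β:B→B', γ:C→C', δ:D→D', ε:E→E' making all squares commute. Assume there exist c∈Im φ₂ with Im φ₁=ker_c φ₂, d∈Im φ₃ with Im φ₂=ker_d φ₃, e₀∈Im φ₄ with Im φ₃=ker_{e₀}φ₄, c'∈Im ψ₂ with Im ψ₁=ker_{c'}ψ₂, d'∈Im ψ₃ with Im ψ₂=ker_{d'}ψ₃, e'∈Im ψ₄ with Im ψ₃=ker_{e'}ψ₄, and that γ(c)=c', δ(d)=d', ε(e₀)=e'. If α is surjective and β and δ are injective, then γ is injective. -/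
/-- Five Lemma, injectivity part. -/
theorem stmt14 {T A B C D E A' B' C' D' E' : Type*} (τ : Truss T)
    (μA : TMod τ A) (μB : TMod τ B) (μC : TMod τ C) (μD : TMod τ D) (μE : TMod τ E)
    (μA' : TMod τ A') (μB' : TMod τ B') (μC' : TMod τ C') (μD' : TMod τ D')
    (μE' : TMod τ E')
    (φ₁ : A → B) (φ₂ : B → C) (φ₃ : C → D) (φ₄ : D → E)
    (ψ₁ : A' → B') (ψ₂ : B' → C') (ψ₃ : C' → D') (ψ₄ : D' → E')
    (α : A → A') (β : B → B') (γ : C → C') (δ : D → D') (ε : E → E')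
    (hφ₁ : IsTModHom μA μB φ₁) (hφ₂ : IsTModHom μB μC φ₂)
    (hφ₃ : IsTModHom μC μD φ₃) (hφ₄ : IsTModHom μD μE φ₄)
    (hψ₁ : IsTModHom μA' μB' ψ₁) (hψ₂ : IsTModHom μB' μC' ψ₂)
    (hψ₃ : IsTModHom μC' μD' ψ₃) (hψ₄ : IsTModHom μD' μE' ψ₄)
    (hα : IsTModHom μA μA' α) (hβ : IsTModHom μB μB' β)
    (hγ : IsTModHom μC μC' γ) (hδ : IsTModHom μD μD' δ)
    (hε : IsTModHom μE μE' ε)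
    (hsq1 : β ∘ φ₁ = ψ₁ ∘ α) (hsq2 : γ ∘ φ₂ = ψ₂ ∘ β)
    (hsq3 : δ ∘ φ₃ = ψ₃ ∘ γ) (hsq4 : ε ∘ φ₄ = ψ₄ ∘ δ)
    (c : C) (hc : c ∈ Set.range φ₂) (hex1 : Set.range φ₁ = kerAt φ₂ c)
    (d : D) (hd : d ∈ Set.range φ₃) (hex2 : Set.range φ₂ = kerAt φ₃ d)
    (e₀ : E) (he₀ : e₀ ∈ Set.range φ₄) (hex3 : Set.range φ₃ = kerAt φ₄ e₀)
    (c' : C') (hc' : c' ∈ Set.range ψ₂) (hex1' : Set.range ψ₁ = kerAt ψ₂ c')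
    (d' : D') (hd' : d' ∈ Set.range ψ₃) (hex2' : Set.range ψ₂ = kerAt ψ₃ d')
    (e' : E') (he' : e' ∈ Set.range ψ₄) (hex3' : Set.range ψ₃ = kerAt ψ₄ e')
    (hγc : γ c = c') (hδd : δ d = d') (hεe : ε e₀ = e')
    (hαs : Function.Surjective α)
    (hβi : Function.Injective β) (hδi : Function.Injective δ) :
    Function.Injective γ := by
  intro x y h
  have hφ3 : φ₃ x = φ₃ y := by
    apply hδi
    have h1 := congrFun hsq3 x
    have h2 := congrFun hsq3 y
    simp only [Function.comp_apply] at h1 h2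
    rw [h1, h2, h]
  have hcφ : φ₃ c = d := by
    have := hc; rw [hex2] at this; exact this
  set t := μC.bkt x y c with ht
  have ht3 : φ₃ t = d := by rw [hφ₃.1, hφ3, hcφ, μD.bkt_idl]
  have htr : t ∈ Set.range φ₂ := by rw [hex2]; exact ht3
  obtain ⟨b, hb⟩ := htr
  have hγt : γ t = c' := by rw [hγ.1, h, hγc, μC'.bkt_idl]
  have hψ₂β : ψ₂ (β b) = c' := by
    have := congrFun hsq2 b
    simp only [Function.comp_apply] at this
    rw [← this, hb, hγt]
  have hbk : β b ∈ Set.range ψ₁ := by rw [hex1']; exact hψ₂β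
  obtain ⟨a', ha'⟩ := hbk
  obtain ⟨a, ha⟩ := hαs a'
  have hbe : β b = β (φ₁ a) := by
    rw [← ha', ← ha]
    exact (congrFun hsq1 a).symm
  have hbf : b = φ₁ a := hβi hbe
  have hφ₂φ₁ : φ₂ (φ₁ a) = c := by
    have : φ₁ a ∈ Set.range φ₁ := ⟨a, rfl⟩
    rw [hex1] at this; exact this
  have htc : t = c := by rw [← hb, hbf, hφ₂φ₁]
  have hx : μC.bkt t c y = x := by rw [μC.bkt_assoc, μC.bkt_idl, μC.bkt_idr]
  rw [htc, μC.bkt_idl] at hx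
  exact hx.symm
end

section
/- (Five Lemma, surjectivity) Let T be a truss and consider a commutative diagram of left T-modules with rows A→φ₁→B→φ₂→C→φ₃→D→φ₄→E and A'→ψ₁→B'→ψ₂→C'→ψ₃→D'→ψ₄→E' and vertical morphisms α:A→A', β:B→B', γ:C→C', δ:D→D', ε:E→E' making all squares commute. Assume there exist c∈Im φ₂ with Im φ₁=ker_c φ₂, d∈Im φ₃ with Im φ₂=ker_d φ₃, e₀∈Im φ₄ with Im φ₃=ker_{e₀}φ₄, c'∈Im ψ₂ with Im ψ₁=ker_{c'}ψ₂, d'∈Im ψ₃ with Im ψ₂=ker_{d'}ψ₃, e'∈Im ψ₄ with Im ψ₃=ker_{e'}ψ₄, and that γ(c)=c', δ(d)=d', ε(e₀)=e'. If ε is injective and β and δ are surjective, then γ is surjective. Consequently, if α, β, δ, ε are all bijective, then γ is bijective. -/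
/-- Five Lemma, surjectivity part and bijectivity consequence. -/
theorem stmt15 {T A B C D E A' B' C' D' E' : Type*} (τ : Truss T)
    (μA : TMod τ A) (μB : TMod τ B) (μC : TMod τ C) (μD : TMod τ D) (μE : TMod τ E)
    (μA' : TMod τ A') (μB' : TMod τ B') (μC' : TMod τ C') (μD' : TMod τ D')
    (μE' : TMod τ E')
    (φ₁ : A → B) (φ₂ : B → C) (φ₃ : C → D) (φ₄ : D → E)
    (ψ₁ : A' → B') (ψ₂ : B' → C') (ψ₃ : C' → D') (ψ₄ : D' → E')
    (α : A → A') (β : B → B') (γ : C → C') (δ : D → D') (ε : E → E')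
    (hφ₁ : IsTModHom μA μB φ₁) (hφ₂ : IsTModHom μB μC φ₂)
    (hφ₃ : IsTModHom μC μD φ₃) (hφ₄ : IsTModHom μD μE φ₄)
    (hψ₁ : IsTModHom μA' μB' ψ₁) (hψ₂ : IsTModHom μB' μC' ψ₂)
    (hψ₃ : IsTModHom μC' μD' ψ₃) (hψ₄ : IsTModHom μD' μE' ψ₄)
    (hα : IsTModHom μA μA' α) (hβ : IsTModHom μB μB' β)
    (hγ : IsTModHom μC μC' γ) (hδ : IsTModHom μD μD' δ)
    (hε : IsTModHom μE μE' ε)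
    (hsq1 : β ∘ φ₁ = ψ₁ ∘ α) (hsq2 : γ ∘ φ₂ = ψ₂ ∘ β)
    (hsq3 : δ ∘ φ₃ = ψ₃ ∘ γ) (hsq4 : ε ∘ φ₄ = ψ₄ ∘ δ)
    (c : C) (hc : c ∈ Set.range φ₂) (hex1 : Set.range φ₁ = kerAt φ₂ c)
    (d : D) (hd : d ∈ Set.range φ₃) (hex2 : Set.range φ₂ = kerAt φ₃ d)
    (e₀ : E) (he₀ : e₀ ∈ Set.range φ₄) (hex3 : Set.range φ₃ = kerAt φ₄ e₀)
    (c' : C') (hc' : c' ∈ Set.range ψ₂) (hex1' : Set.range ψ₁ = kerAt ψ₂ c')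
    (d' : D') (hd' : d' ∈ Set.range ψ₃) (hex2' : Set.range ψ₂ = kerAt ψ₃ d')
    (e' : E') (he' : e' ∈ Set.range ψ₄) (hex3' : Set.range ψ₃ = kerAt ψ₄ e')
    (hγc : γ c = c') (hδd : δ d = d') (hεe : ε e₀ = e') :
    (Function.Injective ε → Function.Surjective β → Function.Surjective δ →
      Function.Surjective γ) ∧
    (Function.Bijective α → Function.Bijective β → Function.Bijective δ →
      Function.Bijective ε → Function.Bijective γ) := by

  have surj : Function.Injective ε → Function.Surjective β → Function.Surjective δ →
      Function.Surjective γ := by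
    intro hεi hβs hδs c''
    obtain ⟨d₁, hd₁⟩ := hδs (ψ₃ c'')
    have h1 : ψ₄ (ψ₃ c'') = e' := by
      have hx : ψ₃ c'' ∈ kerAt ψ₄ e' := by rw [← hex3']; exact ⟨c'', rfl⟩
      exact hx
    have h2 : φ₄ d₁ = e₀ := by
      apply hεi
      have := congrFun hsq4 d₁
      simp only [Function.comp] at this
      rw [this, hd₁, h1, hεe]
    obtain ⟨c₁, hc₁⟩ : d₁ ∈ Set.range φ₃ := by rw [hex3]; exact h2
    set x' := μC'.bkt c'' (γ c₁) c' with hx'def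
    have hγc₁ : ψ₃ (γ c₁) = ψ₃ c'' := by
      have := congrFun hsq3 c₁
      simp only [Function.comp] at this
      rw [← this, hc₁, hd₁]
    have hc'k : ψ₃ c' = d' := by
      have hx : c' ∈ kerAt ψ₃ d' := by rw [← hex2']; exact hc'
      exact hx
    have hx'k : ψ₃ x' = d' := by
      rw [hx'def, hψ₃.1, hγc₁, hc'k, μD'.bkt_idl]
    obtain ⟨b₁', hb₁'⟩ : x' ∈ Set.range ψ₂ := by rw [hex2']; exact hx'k
    obtain ⟨b₁, hb₁⟩ := hβs b₁'
    refine ⟨μC.bkt (φ₂ b₁) c c₁, ?_⟩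
    have hcomm : γ (φ₂ b₁) = x' := by
      have := congrFun hsq2 b₁
      simp only [Function.comp] at this
      rw [this, hb₁, hb₁']
    rw [hγ.1, hcomm, hγc, hx'def, μC'.bkt_assoc, μC'.bkt_idl, μC'.bkt_idr]
  refine ⟨surj, ?_⟩
  intro hαb hβb hδb hεb
  refine ⟨?_, surj hεb.1 hβb.2 hδb.2⟩
  intro c₁ c₂ hcc
  have hck : φ₃ c = d := by
    have hx : c ∈ kerAt φ₃ d := by rw [← hex2]; exact hc
    exact hx
  set w := μC.bkt c₁ c₂ c with hwdef
  have hφ₃c : δ (φ₃ c₁) = δ (φ₃ c₂) := by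
    have h1 := congrFun hsq3 c₁
    have h2 := congrFun hsq3 c₂
    simp only [Function.comp] at h1 h2
    rw [h1, h2, hcc]
  have hφ₃eq : φ₃ c₁ = φ₃ c₂ := hδb.1 hφ₃c
  have hwk : φ₃ w = d := by
    rw [hwdef, hφ₃.1, hφ₃eq, hck, μD.bkt_idl]
  obtain ⟨b, hb⟩ : w ∈ Set.range φ₂ := by rw [hex2]; exact hwk
  have hγw : γ w = c' := by
    rw [hwdef, hγ.1, hcc, hγc, μC'.bkt_idl]
  have hψ₂βb : ψ₂ (β b) = c' := by
    have := congrFun hsq2 b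
    simp only [Function.comp] at this
    rw [← this, hb, hγw]
  obtain ⟨a', ha'⟩ : β b ∈ Set.range ψ₁ := by rw [hex1']; exact hψ₂βb
  obtain ⟨a, ha⟩ := hαb.2 a'
  have hβφ₁ : β (φ₁ a) = β b := by
    have := congrFun hsq1 a
    simp only [Function.comp] at this
    rw [this, ha, ha']
  have hφ₁b : φ₁ a = b := hβb.1 hβφ₁
  have hφ₂b : φ₂ b = c := by
    have hx : φ₁ a ∈ kerAt φ₂ c := by rw [← hex1]; exact ⟨a, rfl⟩
    rw [← hφ₁b]; exact hx
  have hwc : w = c := by rw [← hb, hφ₂b]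
  have : μC.bkt (μC.bkt c₁ c₂ c) c c₂ = μC.bkt c c c₂ := by rw [← hwdef, hwc]
  rw [μC.bkt_assoc, μC.bkt_idl, μC.bkt_idr] at this
  exact this
end

section
/- (Splitting Lemma) Let T be a truss and let ⋆⇢M₁→f→M→g→M₂→⋆ be a short exact sequence of left T-modules: f injective, g surjective, and Im f = ker_{e₂}g for an element e₂∈Abs(M₂). Assume Abs(M₁) is nonempty. Then the following are equivalent: (1) there exists a morphism of T-modules h:M₂→M with g∘h = id_{M₂}; (2) there exists a morphism of T-modules k:M→M₁ with k∘f = id_{M₁}; (3) there exists an isomorphism of T-modules φ:M₁×M₂→M such that φ∘τ₁ = f and g∘φ = π₂, where M₁×M₂ carries the componentwise heap operation and action, τ₁:M₁→M₁×M₂ is m₁↦(m₁,e₂), and π₂:M₁×M₂→M₂ is the projection. -/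
/-- Auxiliary: the abelian group structure on a `T`-module induced by a basepoint. -/
def TMod.grp {T M : Type*} {τ : Truss T} (μ : TMod τ M) (e : M) : AddCommGroup M :=
  letI : Zero M := ⟨e⟩
  letI : Add M := ⟨fun a b => μ.bkt a e b⟩
  letI : Neg M := ⟨fun a => μ.bkt e a e⟩
  { add_assoc := fun a b c => μ.bkt_assoc a e b e c
    zero_add := fun a => μ.bkt_idl a e
    add_zero := fun a => μ.bkt_idr a e
    add_comm := fun a b => μ.bkt_comm a e b
    nsmul := nsmulRec
    zsmul := zsmulRec
    neg_add_cancel := fun a => by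
      show μ.bkt (μ.bkt e a e) e a = e
      rw [μ.bkt_assoc, μ.bkt_idl, μ.bkt_idr] }

theorem TMod.bkt_eq {T M : Type*} {τ : Truss T} (μ : TMod τ M) (e : M) [inst : AddCommGroup M]
    (h : inst = μ.grp e) (a b c : M) : μ.bkt a b c = a - b + c := by
  subst h
  show μ.bkt a b c = μ.bkt (μ.bkt a e (μ.bkt e b e)) e c
  rw [← μ.bkt_assoc a e e, μ.bkt_idr, μ.bkt_assoc, μ.bkt_idl]

/-- Splitting Lemma for modules over trusses. -/
theorem stmt18 {T M₁ M M₂ : Type*} (τ : Truss T)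
    (μM₁ : TMod τ M₁) (μM : TMod τ M) (μM₂ : TMod τ M₂)
    (f : M₁ → M) (g : M → M₂)
    (hfh : IsTModHom μM₁ μM f) (hgh : IsTModHom μM μM₂ g)
    (hfi : Function.Injective f) (hgs : Function.Surjective g)
    (e₂ : M₂) (he₂ : e₂ ∈ Abs μM₂) (hex : Set.range f = kerAt g e₂)
    (habs : (Abs μM₁).Nonempty) :
    ((∃ h : M₂ → M, IsTModHom μM₂ μM h ∧ g ∘ h = id) ↔
      (∃ k : M → M₁, IsTModHom μM μM₁ k ∧ k ∘ f = id)) ∧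
    ((∃ k : M → M₁, IsTModHom μM μM₁ k ∧ k ∘ f = id) ↔
      (∃ φ : M₁ × M₂ → M, IsTModHom (TMod.prod μM₁ μM₂) μM φ ∧
        Function.Bijective φ ∧ (∀ m₁ : M₁, φ (m₁, e₂) = f m₁) ∧
        ∀ p : M₁ × M₂, g (φ p) = p.2)) := by

  classical
  obtain ⟨e₁, he₁⟩ := habs
  letI iM₁ : AddCommGroup M₁ := μM₁.grp e₁
  letI iM : AddCommGroup M := μM.grp (f e₁)
  letI iM₂ : AddCommGroup M₂ := μM₂.grp e₂
  have hb₁ : ∀ a b c, μM₁.bkt a b c = a - b + c := μM₁.bkt_eq e₁ rfl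
  have hbM : ∀ a b c, μM.bkt a b c = a - b + c := μM.bkt_eq (f e₁) rfl
  have hb₂ : ∀ a b c, μM₂.bkt a b c = a - b + c := μM₂.bkt_eq e₂ rfl
  have hz₂ : e₂ = (0 : M₂) := rfl
  have hgf : ∀ a, g (f a) = e₂ := fun a => by
    have : f a ∈ kerAt g e₂ := by rw [← hex]; exact ⟨a, rfl⟩
    exact this
  have hker : ∀ m, g m = e₂ → ∃ a, f a = m := fun m hm => by
    have : m ∈ Set.range f := by rw [hex]; exact hm
    exact this
  have hfe : ∀ t, μM.smul t (f e₁) = f e₁ := fun t => by rw [← hfh.2, he₁ t]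
  -- (1) → (2)
  have p12 : (∃ h : M₂ → M, IsTModHom μM₂ μM h ∧ g ∘ h = id) →
      (∃ k : M → M₁, IsTModHom μM μM₁ k ∧ k ∘ f = id) := by
    rintro ⟨h, hh, hghi⟩
    have hghi' : ∀ x, g (h x) = x := fun x => congrFun hghi x
    have habsM : ∀ t, μM.smul t (h e₂) = h e₂ := fun t => by rw [← hh.2, he₂ t]
    have hc : ∀ m : M, ∃ a, f a = μM.bkt m (h (g m)) (h e₂) := by
      intro m
      apply hker
      rw [hgh.1, hghi', hghi', hb₂, hz₂]
      abel
    choose k hkc using hc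
    refine ⟨k, ⟨?_, ?_⟩, funext fun a => ?_⟩
    · intro a b c
      apply hfi
      simp only [hfh.1, hkc]
      simp only [hgh.1, hh.1]
      simp only [hbM]
      abel
    · intro t m
      apply hfi
      simp only [hfh.2, hkc, hgh.2, hh.2, μM.smul_bkt, habsM]
    · apply hfi
      show f (k (f a)) = f a
      rw [hkc, hgf, μM.bkt_idr]
  -- (2) → (1)
  have p21 : (∃ k : M → M₁, IsTModHom μM μM₁ k ∧ k ∘ f = id) →
      (∃ h : M₂ → M, IsTModHom μM₂ μM h ∧ g ∘ h = id) := by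
    rintro ⟨k, hk, hkf⟩
    have hkf' : ∀ a, k (f a) = a := fun a => congrFun hkf a
    have hfib : ∀ m m', g m = g m' →
        μM.bkt m (f (k m)) (f e₁) = μM.bkt m' (f (k m')) (f e₁) := by
      intro m m' hmm
      have hq : g (μM.bkt m m' (f e₁)) = e₂ := by
        rw [hgh.1, hmm, hgf, hb₂, hz₂]
        abel
      obtain ⟨a, ha⟩ := hker _ hq
      have hka : a = μM₁.bkt (k m) (k m') e₁ := by
        rw [← hkf' a, ha, hk.1, hkf' e₁]
      have E : μM.bkt m m' (f e₁) = μM.bkt (f (k m)) (f (k m')) (f e₁) := by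
        rw [← ha, hka, hfh.1]
      rw [hbM, hbM] at E ⊢
      have E2 : m - m' = f (k m) - f (k m') := add_right_cancel E
      rw [sub_eq_sub_iff_sub_eq_sub] at E2
      rw [E2]
    set h' : M₂ → M := fun m₂ =>
      μM.bkt (Function.surjInv hgs m₂) (f (k (Function.surjInv hgs m₂))) (f e₁) with hh'
    have hsur : ∀ m₂, g (Function.surjInv hgs m₂) = m₂ := fun m₂ => Function.surjInv_eq hgs m₂
    have hdg : ∀ m, h' (g m) = μM.bkt m (f (k m)) (f e₁) := fun m => hfib _ _ (by rw [hsur])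
    have hgh' : ∀ m₂, g (h' m₂) = m₂ := by
      intro m₂
      rw [hh']
      show g (μM.bkt _ (f (k _)) (f e₁)) = m₂
      rw [hgh.1, hgf, hgf, hb₂, hz₂, hsur]
      abel
    refine ⟨h', ⟨?_, ?_⟩, funext hgh'⟩
    · intro x y z
      obtain ⟨mx, rfl⟩ := hgs x
      obtain ⟨my, rfl⟩ := hgs y
      obtain ⟨mz, rfl⟩ := hgs z
      rw [← hgh.1, hdg, hdg, hdg, hdg]
      simp only [hk.1, hfh.1]
      simp only [hbM]
      abel
    · intro t x
      obtain ⟨mx, rfl⟩ := hgs x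
      rw [← hgh.2, hdg, hdg, hk.2, hfh.2, μM.smul_bkt, hfe]
  -- (1) → (3)
  have p13 : (∃ h : M₂ → M, IsTModHom μM₂ μM h ∧ g ∘ h = id) →
      (∃ φ : M₁ × M₂ → M, IsTModHom (TMod.prod μM₁ μM₂) μM φ ∧
        Function.Bijective φ ∧ (∀ m₁ : M₁, φ (m₁, e₂) = f m₁) ∧
        ∀ p : M₁ × M₂, g (φ p) = p.2) := by
    rintro ⟨h, hh, hghi⟩
    have hghi' : ∀ x, g (h x) = x := fun x => congrFun hghi x
    have habsM : ∀ t, μM.smul t (h e₂) = h e₂ := fun t => by rw [← hh.2, he₂ t]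
    refine ⟨fun p => μM.bkt (f p.1) (h e₂) (h p.2), ⟨?_, ?_⟩, ⟨?_, ?_⟩, ?_, ?_⟩
    · intro p q r
      show μM.bkt (f (μM₁.bkt p.1 q.1 r.1)) (h e₂) (h (μM₂.bkt p.2 q.2 r.2)) =
        μM.bkt (μM.bkt (f p.1) (h e₂) (h p.2)) (μM.bkt (f q.1) (h e₂) (h q.2))
          (μM.bkt (f r.1) (h e₂) (h r.2))
      simp only [hfh.1, hh.1, hbM]
      abel
    · intro t p
      show μM.bkt (f (μM₁.smul t p.1)) (h e₂) (h (μM₂.smul t p.2)) =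
        μM.smul t (μM.bkt (f p.1) (h e₂) (h p.2))
      rw [hfh.2, hh.2, μM.smul_bkt, habsM]
    · rintro ⟨p1, p2⟩ ⟨q1, q2⟩ hpq
      simp only at hpq
      have h2 : p2 = q2 := by
        have h3 := congrArg g hpq
        rw [hgh.1, hgh.1, hgf, hgf, hghi', hghi', hghi', hb₂, hb₂, hz₂] at h3
        simpa using h3
      subst h2
      have h1 : p1 = q1 := by
        apply hfi
        rw [hbM, hbM] at hpq
        have h3 := add_right_cancel hpq
        rwa [sub_left_inj] at h3
      rw [h1]
    · intro m
      obtain ⟨m₁, hm₁⟩ := hker (μM.bkt m (h (g m)) (h e₂)) (by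
        rw [hgh.1, hghi', hghi', hb₂, hz₂]
        abel)
      refine ⟨(m₁, g m), ?_⟩
      show μM.bkt (f m₁) (h e₂) (h (g m)) = m
      rw [hm₁, hbM, hbM]
      abel
    · intro m₁
      exact μM.bkt_idr _ _
    · intro p
      show g (μM.bkt (f p.1) (h e₂) (h p.2)) = p.2
      rw [hgh.1, hgf, hghi', hghi', hb₂, hz₂]
      abel
  -- (3) → (2)
  have p32 : (∃ φ : M₁ × M₂ → M, IsTModHom (TMod.prod μM₁ μM₂) μM φ ∧
        Function.Bijective φ ∧ (∀ m₁ : M₁, φ (m₁, e₂) = f m₁) ∧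
        ∀ p : M₁ × M₂, g (φ p) = p.2) →
      (∃ k : M → M₁, IsTModHom μM μM₁ k ∧ k ∘ f = id) := by
    rintro ⟨φ, hφ, hbij, hφτ, hgφ⟩
    let eqv := Equiv.ofBijective φ hbij
    have happ : ∀ x, φ (eqv.symm x) = x := fun x => eqv.apply_symm_apply x
    have hsym : ∀ p : M₁ × M₂, eqv.symm (φ p) = p := fun p => eqv.symm_apply_apply p
    refine ⟨fun m => (eqv.symm m).1, ⟨?_, ?_⟩, funext fun a => ?_⟩
    · intro a b c
      have key : eqv.symm (μM.bkt a b c) =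
          (TMod.prod μM₁ μM₂).bkt (eqv.symm a) (eqv.symm b) (eqv.symm c) := by
        apply hbij.1
        show φ (eqv.symm (μM.bkt a b c)) = φ _
        rw [happ, hφ.1, happ, happ, happ]
      show (eqv.symm (μM.bkt a b c)).1 = μM₁.bkt (eqv.symm a).1 (eqv.symm b).1 (eqv.symm c).1
      rw [key]
      rfl
    · intro t m
      have key : eqv.symm (μM.smul t m) = (TMod.prod μM₁ μM₂).smul t (eqv.symm m) := by
        apply hbij.1
        show φ (eqv.symm (μM.smul t m)) = φ _
        rw [happ, hφ.2, happ]
      show (eqv.symm (μM.smul t m)).1 = μM₁.smul t (eqv.symm m).1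
      rw [key]
      rfl
    · show (eqv.symm (f a)).1 = a
      have key : eqv.symm (f a) = (a, e₂) := by
        apply hbij.1
        show φ (eqv.symm (f a)) = φ _
        rw [happ, hφτ]
      rw [key]
  exact ⟨⟨p12, p21⟩, ⟨fun hk => p13 (p21 hk), p32⟩⟩
end

section
/- Let T be a truss, f:M→N and g:N→P morphisms of left T-modules with f injective, and suppose there exists e∈Im g with Im f = ker_e g and e∈Abs(P). Then for every left T-module Q the sequence ⋆⇢Hom_T(Q,M)→h→Hom_T(Q,N)→l→Hom_T(Q,P) is exact, where h(α)=f∘α and l(β)=g∘β: explicitly, h is injective and Im h = ker_{γ}l, where γ:Q→P is the constant map with value e (which is a morphism of T-modules since e is an absorber). -/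
/-- left exactness of the covariant Hom functor. -/
theorem stmt19 {T M N P Q : Type*} (τ : Truss T)
    (μM : TMod τ M) (μN : TMod τ N) (μP : TMod τ P) (μQ : TMod τ Q)
    (f : M → N) (g : N → P)
    (hfh : IsTModHom μM μN f) (hgh : IsTModHom μN μP g)
    (hfi : Function.Injective f)
    (e : P) (he : e ∈ Set.range g) (hex : Set.range f = kerAt g e)
    (habs : e ∈ Abs μP) :
    ∃ hh : ∀ α : THom μQ μM, IsTModHom μQ μN (f ∘ α.1),
    ∃ hl : ∀ β : THom μQ μN, IsTModHom μQ μP (g ∘ β.1),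
    ∃ hγ : IsTModHom μQ μP (fun _ : Q => e),
      Function.Injective
        (fun α : THom μQ μM => (⟨f ∘ α.1, hh α⟩ : THom μQ μN)) ∧
      Set.range (fun α : THom μQ μM => (⟨f ∘ α.1, hh α⟩ : THom μQ μN)) =
        kerAt (fun β : THom μQ μN => (⟨g ∘ β.1, hl β⟩ : THom μQ μP))
          ⟨fun _ : Q => e, hγ⟩ := by
  refine ⟨?_, ?_, ?_, ?_, ?_⟩
  · intro α
    exact ⟨fun a b c => by simp [Function.comp, α.2.1, hfh.1],
      fun t m => by simp [Function.comp, α.2.2, hfh.2]⟩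
  · intro β
    exact ⟨fun a b c => by simp [Function.comp, β.2.1, hgh.1],
      fun t m => by simp [Function.comp, β.2.2, hgh.2]⟩
  · exact ⟨fun _ _ _ => (μP.bkt_idr e e).symm, fun t _ => (habs t).symm⟩
  · intro α α' h
    apply Subtype.ext
    funext q
    exact hfi (congrFun (congrArg Subtype.val h) q)
  · ext β
    constructor
    · rintro ⟨α, rfl⟩
      apply Subtype.ext
      funext q
      have : f (α.1 q) ∈ Set.range f := ⟨α.1 q, rfl⟩
      rw [hex] at this
      exact this
    · intro hβ
      have hβ' : ∀ q, g (β.1 q) = e := fun q =>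
        congrFun (congrArg Subtype.val hβ) q
      have hmem : ∀ q, β.1 q ∈ Set.range f := fun q => by
        rw [hex]; exact hβ' q
      choose α hα using hmem
      have hαh : IsTModHom μQ μM α := by
        constructor
        · intro a b c
          apply hfi
          rw [hα, hfh.1, hα, hα, hα, β.2.1]
        · intro t m
          apply hfi
          rw [hα, hfh.2, hα, β.2.2]
      exact ⟨⟨α, hαh⟩, Subtype.ext (funext fun q => hα q)⟩
end
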